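/- arXiv:1410.7947 — 6 statements merged into one kernel-verified Lean document; each statement's English description precedes it below -/
import Mathlib

section
/- Let X be a nonempty zero-dimensional perfect compact T₁-space. For any nonempty compact metric space Y, there exists a continuous surjection from X onto Y. -/
/-!
In a zero-dimensional perfect T₁-space every nonempty clopen set contains a smaller nonempty
clopen set, so a fixed choice `σ` of such pieces splits every nonempty clopen `U` into the two
nonempty clopens `σ U` and `U \ σ U`. Iterating from `univ` gives, for every binary word, a
nonempty clopen cylinder, the cylinders of each length partitioning the space. The `n`-th digit of
a point says in which half of its cylinder of length `n` it lies; this map to the Cantor space is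
continuous because the cylinders are clopen, and onto by compactness, since the cylinders along any
infinite word are nested and nonempty. Composing with the Hausdorff–Alexandroff theorem, which maps
the Cantor space onto every nonempty compact metric space, gives the result.
-/

open Set TopologicalSpace

/-- A space is zero-dimensional: it has a base of clopen sets. -/
def ZeroDimensional (X : Type*) [TopologicalSpace X] : Prop :=
  ∃ B : Set (Set X), TopologicalSpace.IsTopologicalBasis B ∧ ∀ s ∈ B, IsClopen s

/-- A space is perfect: it has no isolated points. -/
def PerfectTop (X : Type*) [TopologicalSpace X] : Prop :=
  ∀ x : X, ¬ IsOpen ({x} : Set X)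

theorem exists_isClopen_nonempty_ssubset {X : Type*} [TopologicalSpace X] [T1Space X]
    (hzd : ZeroDimensional X) (hperf : PerfectTop X) {U : Set X} (hU : IsOpen U)
    (hne : U.Nonempty) : ∃ V, IsClopen V ∧ V.Nonempty ∧ V ⊂ U := by
  obtain ⟨B, hB, hBclopen⟩ := hzd
  obtain ⟨x, hx⟩ := hne
  obtain ⟨y, hyU, hyx⟩ : ∃ y ∈ U, y ≠ x := by
    by_contra! h
    exact hperf x (eq_singleton_iff_unique_mem.2 ⟨hx, h⟩ ▸ hU)
  obtain ⟨V, hVB, hxV, hVU⟩ :=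
    hB.exists_subset_of_mem_open (show x ∈ U \ {y} from ⟨hx, hyx.symm⟩)
      (hU.sdiff isClosed_singleton)
  exact ⟨V, hBclopen V hVB, ⟨x, hxV⟩,
    (ssubset_iff_of_subset (hVU.trans sdiff_subset)).2 ⟨y, hyU, fun hy => (hVU hy).2 rfl⟩⟩

section SplitCylinder

variable {X : Type*} [TopologicalSpace X] (σ : Clopens X → Clopens X)

/-- Words are read backwards: the head of a word is its most recent digit. -/
def splitCylinder : List Bool → Clopens X
  | [] => ⊤
  | true :: w => σ (splitCylinder w)
  | false :: w => splitCylinder w \ σ (splitCylinder w)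

def splitDigitSet (n : ℕ) : Set X :=
  ⋃ w ∈ {w : List Bool | w.length = n}, (splitCylinder σ (true :: w) : Set X)

noncomputable def splitDigits (x : X) (n : ℕ) : Bool :=
  (splitDigitSet σ n).boolIndicator x

variable {σ}

theorem splitCylinder_ne_bot [Nonempty X] (hσ : ∀ U ≠ ⊥, ⊥ < σ U ∧ σ U < U) :
    ∀ w, splitCylinder σ w ≠ ⊥
  | [] => fun h => univ_nonempty.ne_empty (congrArg SetLike.coe h)
  | true :: w => (hσ _ (splitCylinder_ne_bot hσ w)).1.ne'
  | false :: w => fun h => (hσ _ (splitCylinder_ne_bot hσ w)).2.not_ge (sdiff_eq_bot_iff.1 h)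

theorem splitCylinder_cons_le [Nonempty X] (hσ : ∀ U ≠ ⊥, ⊥ < σ U ∧ σ U < U) :
    ∀ a w, splitCylinder σ (a :: w) ≤ splitCylinder σ w
  | true, w => (hσ _ (splitCylinder_ne_bot hσ w)).2.le
  | false, _ => sdiff_le

theorem eq_of_mem_splitCylinder [Nonempty X] (hσ : ∀ U ≠ ⊥, ⊥ < σ U ∧ σ U < U) {x : X} :
    ∀ {w w' : List Bool}, w.length = w'.length →
      x ∈ splitCylinder σ w → x ∈ splitCylinder σ w' → w = w'
  | [], [], _, _, _ => rfl
  | a :: w, a' :: w', hlen, hx, hx' => by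
    obtain rfl : w = w' := eq_of_mem_splitCylinder hσ (Nat.succ_injective hlen)
      (splitCylinder_cons_le hσ a w hx) (splitCylinder_cons_le hσ a' w' hx')
    cases a <;> cases a'
    · rfl
    · exact (hx.2 hx').elim
    · exact (hx'.2 hx).elim
    · rfl

theorem isClopen_splitDigitSet (n : ℕ) : IsClopen (splitDigitSet σ n) :=
  (List.finite_length_eq Bool n).isClopen_biUnion fun _ _ => (splitCylinder σ _).isClopen

theorem mem_splitDigitSet_iff [Nonempty X] (hσ : ∀ U ≠ ⊥, ⊥ < σ U ∧ σ U < U) {x : X}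
    {a : Bool} {w : List Bool} (hx : x ∈ splitCylinder σ (a :: w)) :
    x ∈ splitDigitSet σ w.length ↔ a = true := by
  simp only [splitDigitSet, mem_ofPred_eq, mem_iUnion, exists_prop]
  constructor
  · rintro ⟨w', hlen, hx'⟩
    exact (List.cons_eq_cons.1 (eq_of_mem_splitCylinder hσ (by simp [hlen]) hx' hx)).1.symm
  · rintro rfl
    exact ⟨w, rfl, hx⟩

theorem continuous_splitDigits : Continuous (splitDigits σ) :=
  continuous_pi fun n => (continuous_boolIndicator_iff_isClopen _).2 (isClopen_splitDigitSet n)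

theorem splitDigits_surjective [CompactSpace X] [Nonempty X]
    (hσ : ∀ U ≠ ⊥, ⊥ < σ U ∧ σ U < U) : Function.Surjective (splitDigits σ) := by
  intro b
  set word : ℕ → List Bool := fun n => ((List.range n).map b).reverse
  have hword : ∀ n, word (n + 1) = b n :: word n := by simp [word, List.range_succ]
  obtain ⟨x, hx⟩ := IsCompact.nonempty_iInter_of_sequence_nonempty_isCompact_isClosed
    (fun n => (splitCylinder σ (word n) : Set X))
    (fun n => by rw [hword]; exact splitCylinder_cons_le hσ _ _)
    (fun n => Set.nonempty_iff_ne_empty.2 fun h => splitCylinder_ne_bot hσ _ (Clopens.ext h))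
    (splitCylinder σ _).isClosed.isCompact (fun n => (splitCylinder σ _).isClosed)
  refine ⟨x, funext fun n => Bool.eq_iff_iff.2 ?_⟩
  have hxn : x ∈ splitCylinder σ (b n :: word n) := hword n ▸ mem_iInter.1 hx (n + 1)
  have hlen : (word n).length = n := by simp [word]
  rw [splitDigits, ← mem_iff_boolIndicator]
  simpa only [hlen] using mem_splitDigitSet_iff hσ hxn

end SplitCylinder

theorem exists_continuous_surjective_nat_bool_of_zeroDim_perfect {X : Type*}
    [TopologicalSpace X] [Nonempty X] [CompactSpace X] [T1Space X]
    (hzd : ZeroDimensional X) (hperf : PerfectTop X) :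
    ∃ f : X → ℕ → Bool, Continuous f ∧ Function.Surjective f := by
  have hsplit (U : Clopens X) (hU : U ≠ ⊥) : ∃ V : Clopens X, ⊥ < V ∧ V < U := by
    obtain ⟨V, hV, hVne, hVU⟩ := exists_isClopen_nonempty_ssubset hzd hperf U.isOpen
      (Set.nonempty_iff_ne_empty.2 fun h => hU (Clopens.ext h))
    exact ⟨⟨V, hV⟩, bot_lt_iff_ne_bot.2 fun h => hVne.ne_empty (congrArg SetLike.coe h), hVU⟩
  choose! σ hσ using hsplit
  exact ⟨splitDigits σ, continuous_splitDigits, splitDigits_surjective hσ⟩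

/-- Let `X` be a nonempty zero-dimensional perfect compact T₁-space. For any nonempty
compact metric space `Y`, there exists a continuous surjection from `X` onto `Y`. -/
theorem exists_continuous_surjection_of_zeroDim_perfect_compact_t1
    {X Y : Type*} [TopologicalSpace X] [Nonempty X] [CompactSpace X] [T1Space X]
    (hzd : ZeroDimensional X) (hperf : PerfectTop X)
    [MetricSpace Y] [CompactSpace Y] [Nonempty Y] :
    ∃ f : X → Y, Continuous f ∧ Function.Surjective f := by
  obtain ⟨g, hg, hg'⟩ := exists_continuous_surjective_nat_bool_of_zeroDim_perfect hzd hperf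
  obtain ⟨h, hh, hh'⟩ := exists_nat_bool_continuous_surjective_of_compact Y
  exact ⟨h ∘ g, hh.comp hg, hh'.comp hg'⟩
end

section
/- Let X be a nonempty zero-dimensional perfect compact T₁-space and Y a compact metric space. For any positive integer n, any mutually disjoint nonempty clopen subsets A₁, …, Aₙ of X covering X, and any nonempty closed subsets B₁, …, Bₙ of Y covering Y, there exists a continuous surjection f : X → Y such that f(Aᵢ) = Bᵢ for each i. -/
open Set Metric Filter Topology Function

theorem pairwise_disjoint_option_elim {α ι : Type*} {s : Set α} {f : ι → Set α}
    (hf : Pairwise (Disjoint on f)) (hs : ∀ i, Disjoint s (f i)) :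
    Pairwise (Disjoint on fun o : Option ι => o.elim s f) := by
  rintro (_ | i) (_ | j) hij
  · exact absurd rfl hij
  · exact hs j
  · exact (hs i).symm
  · exact hf (fun h => hij (congrArg some h))

section Splitting

variable {X : Type*} [TopologicalSpace X] [T1Space X]

theorem exists_isClopen_nonempty_diff_nonempty (hzd : ZeroDimensional X) (hperf : PerfectTop X)
    {P : Set X} (hP : IsClopen P) (hne : P.Nonempty) :
    ∃ U ⊆ P, IsClopen U ∧ U.Nonempty ∧ (P \ U).Nonempty := by
  obtain ⟨𝓑, h𝓑, hclopen⟩ := hzd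
  obtain ⟨x, hx⟩ := hne
  obtain ⟨y, hy, hyx⟩ : ∃ y ∈ P, y ≠ x := by
    by_contra! h
    exact hperf x (eq_singleton_iff_unique_mem.2 ⟨hx, h⟩ ▸ hP.isOpen)
  obtain ⟨U, hU, hxU, hUsub⟩ := h𝓑.exists_subset_of_mem_open
    (show x ∈ P \ {y} from ⟨hx, hyx.symm⟩) (hP.isOpen.sdiff isClosed_singleton)
  exact ⟨U, fun z hz => (hUsub hz).1, hclopen U hU, ⟨x, hxU⟩, y, hy, fun hyU => (hUsub hyU).2 rfl⟩

theorem exists_clopen_partition (hzd : ZeroDimensional X) (hperf : PerfectTop X)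
    (ι : Type*) [Finite ι] [Nonempty ι] {P : Set X} (hP : IsClopen P) (hne : P.Nonempty) :
    ∃ C : ι → Set X, (∀ i, IsClopen (C i)) ∧ (∀ i, (C i).Nonempty) ∧
      Pairwise (Disjoint on C) ∧ ⋃ i, C i = P := by
  rename_i hι
  revert hι
  induction ι using Finite.induction_empty_option generalizing P with
  | of_equiv e ih =>
    intro _
    have := e.nonempty
    obtain ⟨C, hC, hCne, hdisj, hcover⟩ := ih hP hne
    exact ⟨C ∘ e.symm, fun i => hC _, fun i => hCne _,
      hdisj.comp_of_injective e.symm.injective, e.symm.surjective.iUnion_comp C ▸ hcover⟩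
  | h_empty =>
    intro h
    exact (not_nonempty_pempty h).elim
  | @h_option ι _ ih =>
    intro _
    cases isEmpty_or_nonempty ι
    · exact ⟨fun _ => P, fun _ => hP, fun _ => hne, Subsingleton.pairwise, iUnion_const P⟩
    obtain ⟨U, hUP, hU, hUne, hPUne⟩ := exists_isClopen_nonempty_diff_nonempty hzd hperf hP hne
    obtain ⟨C, hC, hCne, hdisj, hcover⟩ := ih (hP.diff hU) hPUne
    refine ⟨fun o => o.elim U C, ?_, ?_, ?_, ?_⟩
    · rintro (_ | i) <;> simp [hU, hC]
    · rintro (_ | i) <;> simp [hUne, hCne]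
    · refine pairwise_disjoint_option_elim hdisj fun i => ?_
      exact disjoint_left.2 fun x hxU hxC => (hcover ▸ mem_iUnion_of_mem i hxC : x ∈ P \ U).2 hxU
    · simp [iUnion_option, hcover, union_sdiff_cancel hUP]

end Splitting

/-- A partition of `X` into clopen pieces, encoded by the map `piece` sending each point to the
piece containing it; each piece carries a nonempty closed `label` in `Y`. -/
structure LabelledPartition (X Y : Type*) [TopologicalSpace X] [TopologicalSpace Y] where
  piece : X → Set X
  label : X → Set Y
  isClopen_piece : ∀ x, IsClopen (piece x)
  mem_piece : ∀ x, x ∈ piece x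
  piece_eq_of_mem : ∀ {x x'}, x' ∈ piece x → piece x' = piece x
  label_eq_of_mem : ∀ {x x'}, x' ∈ piece x → label x' = label x
  isClosed_label : ∀ x, IsClosed (label x)
  label_nonempty : ∀ x, (label x).Nonempty

namespace LabelledPartition

variable {X Y : Type*} [TopologicalSpace X]

section Basic

variable [TopologicalSpace Y]

theorem exists_of_iUnion_eq_univ {ι : Type*} (C : ι → Set X) (D : ι → Set Y)
    (hC : ∀ i, IsClopen (C i)) (hdisj : Pairwise (Disjoint on C)) (hcover : ⋃ i, C i = univ)
    (hD : ∀ i, IsClosed (D i)) (hDne : ∀ i, (D i).Nonempty) :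
    ∃ S : LabelledPartition X Y, ∀ i, ∀ x ∈ C i, S.piece x = C i ∧ S.label x = D i := by
  choose idx hidx using fun x => mem_iUnion.1 (hcover ▸ mem_univ x : x ∈ ⋃ i, C i)
  have idx_eq : ∀ {x i}, x ∈ C i → idx x = i := fun {x i} hx =>
    hdisj.eq (not_disjoint_iff.2 ⟨x, hidx x, hx⟩)
  refine ⟨⟨fun x => C (idx x), fun x => D (idx x), fun x => hC _, hidx,
    fun h => by rw [idx_eq h], fun h => by rw [idx_eq h], fun x => hD _, fun x => hDne _⟩, ?_⟩
  intro i x hx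
  simp only [idx_eq hx, and_self]

theorem isClopen_setOf_label (S : LabelledPartition X Y) (p : Set Y → Prop) :
    IsClopen {x | p (S.label x)} := by
  have isOpen : ∀ p : Set Y → Prop, IsOpen {x | p (S.label x)} := fun p =>
    isOpen_iff_forall_mem_open.2 fun x hx =>
      ⟨S.piece x, fun x' hx' => show p _ from S.label_eq_of_mem hx' ▸ hx,
        (S.isClopen_piece x).isOpen, S.mem_piece x⟩
  exact ⟨⟨isOpen fun s => ¬ p s⟩, isOpen p⟩

end Basic

variable [MetricSpace Y]

structure Refines (S' S : LabelledPartition X Y) (δ : ℝ) : Prop where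
  piece_subset : ∀ x, S'.piece x ⊆ S.piece x
  label_subset : ∀ x, S'.label x ⊆ S.label x
  diam_label_le : ∀ x, diam (S'.label x) ≤ δ
  exists_mem_label : ∀ x, ∀ y ∈ S.label x, ∃ x' ∈ S.piece x, y ∈ S'.label x'

section Refinement

variable [T1Space X] [CompactSpace Y]

theorem exists_refines_on (hzd : ZeroDimensional X) (hperf : PerfectTop X)
    {P : Set X} (hP : IsClopen P) (hPne : P.Nonempty) {T : Set Y} (hT : IsClosed T)
    (hTne : T.Nonempty) {δ : ℝ} (hδ : 0 < δ) :
    ∃ R : LabelledPartition X Y,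
      (∀ x ∈ P, R.piece x ⊆ P ∧ R.label x ⊆ T ∧ diam (R.label x) ≤ δ) ∧
      ∀ y ∈ T, ∃ x ∈ P, y ∈ R.label x := by
  obtain ⟨t, htT, htfin, hcov⟩ := finite_cover_balls_of_compact hT.isCompact (half_pos hδ)
  have : Finite t := htfin.to_subtype
  have : Nonempty t := by
    obtain ⟨c, hc, -⟩ := mem_iUnion₂.1 (hcov hTne.some_mem)
    exact ⟨⟨c, hc⟩⟩
  obtain ⟨C, hC, hCne, hdisj, hcover⟩ := exists_clopen_partition hzd hperf t hP hPne
  have hCP : ∀ c, C c ⊆ P := fun c => hcover ▸ subset_iUnion C c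
  -- `Pᶜ` is one more piece, labelled `T`.
  obtain ⟨R, hR⟩ := exists_of_iUnion_eq_univ (fun o : Option t => o.elim Pᶜ C)
    (fun o : Option t => o.elim T fun c => T ∩ closedBall c (δ / 2))
    (by rintro (_ | c); exacts [hP.compl, hC c])
    (pairwise_disjoint_option_elim hdisj fun c => disjoint_compl_left.mono_right (hCP c))
    (by simp [iUnion_option, hcover])
    (by rintro (_ | c); exacts [hT, hT.inter isClosed_closedBall])
    (by rintro (_ | c); exacts [hTne, ⟨c, htT c.2, mem_closedBall_self (half_pos hδ).le⟩])
  refine ⟨R, fun x hx => ?_, fun y hy => ?_⟩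
  · obtain ⟨c, hxc⟩ := mem_iUnion.1 (hcover.symm ▸ hx : x ∈ ⋃ c, C c)
    obtain ⟨hpiece, hlabel⟩ := hR (some c) x hxc
    refine ⟨hpiece ▸ hCP c, hlabel ▸ inter_subset_left, hlabel ▸ ?_⟩
    calc diam (T ∩ closedBall (c : Y) (δ / 2))
        ≤ diam (closedBall (c : Y) (δ / 2)) := diam_mono inter_subset_right isBounded_closedBall
      _ ≤ 2 * (δ / 2) := diam_closedBall (half_pos hδ).le
      _ = δ := by ring
  · obtain ⟨c, hc, hyc⟩ := mem_iUnion₂.1 (hcov hy)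
    obtain ⟨x, hx⟩ := hCne ⟨c, hc⟩
    exact ⟨x, hCP _ hx, (hR (some ⟨c, hc⟩) x hx).2 ▸ ⟨hy, ball_subset_closedBall hyc⟩⟩

theorem exists_refines (hzd : ZeroDimensional X) (hperf : PerfectTop X)
    (S : LabelledPartition X Y) {δ : ℝ} (hδ : 0 < δ) :
    ∃ S' : LabelledPartition X Y, S'.Refines S δ := by
  choose R hR using fun (P : Set X) (T : Set Y)
    (h : IsClopen P ∧ P.Nonempty ∧ IsClosed T ∧ T.Nonempty) =>
    exists_refines_on hzd hperf h.1 h.2.1 h.2.2.1 h.2.2.2 hδ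
  -- Chosen as a function of the piece and its label, the refinement agrees across each piece.
  have hS : ∀ x, IsClopen (S.piece x) ∧ (S.piece x).Nonempty ∧ IsClosed (S.label x) ∧
      (S.label x).Nonempty := fun x =>
    ⟨S.isClopen_piece x, ⟨x, S.mem_piece x⟩, S.isClosed_label x, S.label_nonempty x⟩
  set R' : X → LabelledPartition X Y := fun x => R (S.piece x) (S.label x) (hS x)
  have hR' := fun x => hR (S.piece x) (S.label x) (hS x)
  have R'_eq : ∀ {x x'}, x' ∈ S.piece x → R' x' = R' x := fun h => by
    simp only [R', S.piece_eq_of_mem h, S.label_eq_of_mem h]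
  have piece_subset : ∀ x, (R' x).piece x ⊆ S.piece x := fun x => ((hR' x).1 x (S.mem_piece x)).1
  refine ⟨⟨fun x => (R' x).piece x, fun x => (R' x).label x, fun x => (R' x).isClopen_piece x,
    fun x => (R' x).mem_piece x, fun h => ?_, fun h => ?_, fun x => (R' x).isClosed_label x,
    fun x => (R' x).label_nonempty x⟩, ⟨piece_subset, fun x => ((hR' x).1 x (S.mem_piece x)).2.1,
    fun x => ((hR' x).1 x (S.mem_piece x)).2.2, fun x y hy => ?_⟩⟩
  · rw [R'_eq (piece_subset _ h)]; exact (R' _).piece_eq_of_mem h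
  · rw [R'_eq (piece_subset _ h)]; exact (R' _).label_eq_of_mem h
  · obtain ⟨x', hx', hyx'⟩ := (hR' x).2 y hy
    refine ⟨x', hx', ?_⟩
    show y ∈ (R' x').label x'
    rwa [R'_eq hx']

theorem exists_seq_refines (hzd : ZeroDimensional X) (hperf : PerfectTop X)
    (S₀ : LabelledPartition X Y) {ε : ℕ → ℝ} (hε : ∀ k, 0 < ε k) :
    ∃ S : ℕ → LabelledPartition X Y, S 0 = S₀ ∧ ∀ k, (S (k + 1)).Refines (S k) (ε k) := by
  choose next hnext using fun k (S : LabelledPartition X Y) => S.exists_refines hzd hperf (hε k)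
  exact ⟨fun k => Nat.rec S₀ next k, rfl, fun k => hnext k _⟩

end Refinement

section Limit

variable [CompactSpace Y] {S : ℕ → LabelledPartition X Y} {ε : ℕ → ℝ}

theorem dist_le_of_mem_label (hS : ∀ k, (S (k + 1)).Refines (S k) (ε k)) {k : ℕ} {x : X}
    {y z : Y} (hy : y ∈ (S (k + 1)).label x) (hz : z ∈ (S (k + 1)).label x) : dist y z ≤ ε k :=
  (dist_le_diam_of_mem ((S (k + 1)).isClosed_label x).isCompact.isBounded hy hz).trans
    ((hS k).diam_label_le x)

theorem exists_forall_mem_label (hS : ∀ k, (S (k + 1)).Refines (S k) (ε k)) :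
    ∃ f : X → Y, ∀ k x, f x ∈ (S k).label x := by
  choose f hf using fun x => IsCompact.nonempty_iInter_of_sequence_nonempty_isCompact_isClosed
    (fun k => (S k).label x) (fun k => (hS k).label_subset x) (fun k => (S k).label_nonempty x)
    ((S 0).isClosed_label x).isCompact (fun k => (S k).isClosed_label x)
  exact ⟨f, fun k x => mem_iInter.1 (hf x) k⟩

variable {f : X → Y}

theorem continuous_of_forall_mem_label (hS : ∀ k, (S (k + 1)).Refines (S k) (ε k))
    (hε : Tendsto ε atTop (𝓝 0)) (hf : ∀ k x, f x ∈ (S k).label x) : Continuous f := by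
  refine continuous_iff_continuousAt.2 fun x => Metric.tendsto_nhds.2 fun r hr => ?_
  obtain ⟨k, hk⟩ := (hε.eventually (gt_mem_nhds hr)).exists
  filter_upwards [((S (k + 1)).isClopen_piece x).isOpen.mem_nhds ((S (k + 1)).mem_piece x)]
    with x' hx'
  have hfx' : f x' ∈ (S (k + 1)).label x := (S (k + 1)).label_eq_of_mem hx' ▸ hf (k + 1) x'
  exact (dist_le_of_mem_label hS hfx' (hf (k + 1) x)).trans_lt hk

theorem eq_of_forall_mem_label (hS : ∀ k, (S (k + 1)).Refines (S k) (ε k))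
    (hε : Tendsto ε atTop (𝓝 0)) (hf : ∀ k x, f x ∈ (S k).label x) {x : X} {y : Y}
    (hy : ∀ k, y ∈ (S k).label x) : f x = y :=
  dist_le_zero.1 <| ge_of_tendsto' hε fun k => dist_le_of_mem_label hS (hf (k + 1) x) (hy (k + 1))

theorem label_subset_image_piece [CompactSpace X] (hS : ∀ k, (S (k + 1)).Refines (S k) (ε k))
    (hε : Tendsto ε atTop (𝓝 0)) (hf : ∀ k x, f x ∈ (S k).label x) (x : X) :
    (S 0).label x ⊆ f '' (S 0).piece x := by
  intro y hy
  set F : ℕ → Set X := fun k => {x' | y ∈ (S k).label x'} ∩ (S 0).piece x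
  have hF_closed : ∀ k, IsClosed (F k) := fun k =>
    ((S k).isClopen_setOf_label (y ∈ ·)).isClosed.inter ((S 0).isClopen_piece x).isClosed
  have piece_subset_zero : ∀ k x', (S k).piece x' ⊆ (S 0).piece x' := fun k x' =>
    antitone_nat_of_succ_le (f := fun k => (S k).piece x') (fun k => (hS k).piece_subset x')
      (Nat.zero_le k)
  have hF_nonempty : ∀ k, (F k).Nonempty := by
    intro k
    induction k with
    | zero => exact ⟨x, hy, (S 0).mem_piece x⟩
    | succ k ih =>
      obtain ⟨x', hyx', hx'⟩ := ih
      obtain ⟨x'', hx'', hyx''⟩ := (hS k).exists_mem_label x' y hyx'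
      exact ⟨x'', hyx'', (S 0).piece_eq_of_mem hx' ▸ piece_subset_zero k x' hx''⟩
  obtain ⟨x', hx'⟩ := IsCompact.nonempty_iInter_of_sequence_nonempty_isCompact_isClosed F
    (fun k => inter_subset_inter_left _ fun x' h => (hS k).label_subset x' h) hF_nonempty
    (hF_closed 0).isCompact hF_closed
  rw [mem_iInter] at hx'
  exact ⟨x', (hx' 0).2, eq_of_forall_mem_label hS hε hf fun k => (hx' k).1⟩

end Limit

end LabelledPartition

theorem exists_continuous_surjection_mapping_clopen_pieces_onto_closed_pieces_general
    {X Y : Type*} [TopologicalSpace X] [CompactSpace X] [T1Space X]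
    (hzd : ZeroDimensional X) (hperf : PerfectTop X)
    [MetricSpace Y] [CompactSpace Y]
    (n : ℕ)
    (A : Fin n → Set X) (hAclopen : ∀ i, IsClopen (A i))
    (hAne : ∀ i, (A i).Nonempty)
    (hAdisj : Pairwise (Function.onFun Disjoint A))
    (hAcover : (⋃ i, A i) = Set.univ)
    (B : Fin n → Set Y) (hBclosed : ∀ i, IsClosed (B i))
    (hBne : ∀ i, (B i).Nonempty)
    (hBcover : (⋃ i, B i) = Set.univ) :
    ∃ f : X → Y, Continuous f ∧ Function.Surjective f ∧ ∀ i, f '' A i = B i := by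
  obtain ⟨S₀, hS₀⟩ := LabelledPartition.exists_of_iUnion_eq_univ A B hAclopen hAdisj hAcover
    hBclosed hBne
  obtain ⟨S, rfl, hS⟩ := S₀.exists_seq_refines hzd hperf (ε := fun k => (1 / 2 : ℝ) ^ k)
    fun k => by positivity
  have hε : Tendsto (fun k => (1 / 2 : ℝ) ^ k) atTop (𝓝 0) :=
    tendsto_pow_atTop_nhds_zero_of_lt_one (by norm_num) (by norm_num)
  obtain ⟨f, hf⟩ := LabelledPartition.exists_forall_mem_label hS
  have himage : ∀ i, f '' A i = B i := fun i => by
    obtain ⟨x, hx⟩ := hAne i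
    obtain ⟨hpiece, hlabel⟩ := hS₀ i x hx
    refine (image_subset_iff.2 fun x' hx' => (hS₀ i x' hx').2 ▸ hf 0 x').antisymm ?_
    exact hpiece ▸ hlabel ▸ LabelledPartition.label_subset_image_piece hS hε hf x
  refine ⟨f, LabelledPartition.continuous_of_forall_mem_label hS hε hf, fun y => ?_, himage⟩
  obtain ⟨i, hi⟩ := mem_iUnion.1 (hBcover ▸ mem_univ y : y ∈ ⋃ i, B i)
  rw [← himage i] at hi
  obtain ⟨x, -, hx⟩ := hi
  exact ⟨x, hx⟩

/-- Let `X` be a nonempty zero-dimensional perfect compact T₁-space and `Y` a compact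
metric space. For any positive `n`, mutually disjoint nonempty clopen `A₁, …, Aₙ`
covering `X`, and nonempty closed `B₁, …, Bₙ` covering `Y`, there is a continuous
surjection `f : X → Y` with `f(Aᵢ) = Bᵢ` for each `i`. -/
theorem exists_continuous_surjection_mapping_clopen_pieces_onto_closed_pieces
    {X Y : Type*} [TopologicalSpace X] [Nonempty X] [CompactSpace X] [T1Space X]
    (hzd : ZeroDimensional X) (hperf : PerfectTop X)
    [MetricSpace Y] [CompactSpace Y]
    (n : ℕ) (hn : 0 < n)
    (A : Fin n → Set X) (hAclopen : ∀ i, IsClopen (A i))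
    (hAne : ∀ i, (A i).Nonempty)
    (hAdisj : Pairwise (Function.onFun Disjoint A))
    (hAcover : (⋃ i, A i) = Set.univ)
    (B : Fin n → Set Y) (hBclosed : ∀ i, IsClosed (B i))
    (hBne : ∀ i, (B i).Nonempty)
    (hBcover : (⋃ i, B i) = Set.univ) :
    ∃ f : X → Y, Continuous f ∧ Function.Surjective f ∧ ∀ i, f '' A i = B i :=
  exists_continuous_surjection_mapping_clopen_pieces_onto_closed_pieces_general hzd hperf n A
    hAclopen hAne hAdisj hAcover B hBclosed hBne hBcover
end

section
/- If X and Y are Cantor sets, then for any positive integer n, any n mutually disjoint nonempty clopen subsets A₁, …, Aₙ of X, and any n nonempty clopen subsets B₁, …, Bₙ of Y covering Y, there exists a continuous surjection f : X → Y such that f(Aᵢ) = Bᵢ for each i. -/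
/-- A Cantor set: a nonempty zero-dimensional perfect compact metrizable space
(equivalently, a space homeomorphic to the Cantor middle-third set). -/
def IsCantorSpace (X : Type*) [TopologicalSpace X] : Prop :=
  Nonempty X ∧ CompactSpace X ∧ TopologicalSpace.MetrizableSpace X ∧
    ZeroDimensional X ∧ PerfectTop X

open Set Function TopologicalSpace Topology PiNat

namespace BinarySplitting

variable {X : Type*} (σ : Set X → X → Bool)

def cell (y : ℕ → Bool) : ℕ → Set X
  | 0 => univ
  | n + 1 => {x ∈ cell y n | σ (cell y n) x = y n}

-- `address` cannot be defined as the branch whose cells contain `x`, since that branch is needed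
-- to build its own cells; `pathCell` unfolds this recursion (see `pathCell_eq_cell`).
def pathCell (x : X) : ℕ → Set X
  | 0 => univ
  | n + 1 => {x' ∈ pathCell x n | σ (pathCell x n) x' = σ (pathCell x n) x}

def address (x : X) (n : ℕ) : Bool := σ (pathCell σ x n) x

theorem cell_congr {y y' : ℕ → Bool} {n : ℕ} (h : y' ∈ cylinder y n) :
    cell σ y' n = cell σ y n := by
  induction n with
  | zero => rfl
  | succ n ih =>
    simp only [cell, ih fun j hj => h j (Nat.lt_succ_of_lt hj), h n n.lt_succ_self]

theorem pathCell_eq_cell (x : X) (n : ℕ) : pathCell σ x n = cell σ (address σ x) n := by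
  induction n with
  | zero => rfl
  | succ n ih => simp only [pathCell, cell, address, ih]

theorem preimage_address_cylinder (y : ℕ → Bool) (n : ℕ) :
    address σ ⁻¹' cylinder y n = cell σ y n := by
  induction n with
  | zero => simp [cell]
  | succ n ih =>
    ext x
    have hsucc : address σ x ∈ cylinder y (n + 1) ↔
        address σ x ∈ cylinder y n ∧ address σ x n = y n := by
      simp only [mem_cylinder_iff, Nat.forall_lt_succ_right]
    rw [mem_preimage, hsucc, ← mem_preimage, ih]
    simp only [cell, mem_ofPred_eq, and_congr_right_iff]
    intro hx
    rw [← ih, mem_preimage] at hx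
    rw [← cell_congr σ hx, ← pathCell_eq_cell, address]

variable [TopologicalSpace X] {σ}

theorem isOpen_cell (hσ : ∀ U, Continuous (σ U)) (y : ℕ → Bool) (n : ℕ) :
    IsOpen (cell σ y n) := by
  induction n with
  | zero => exact isOpen_univ
  | succ n ih => exact ih.inter ((isOpen_discrete {y n}).preimage (hσ _))

theorem continuous_address (hσ : ∀ U, Continuous (σ U)) : Continuous (address σ) := by
  refine (isTopologicalBasis_cylinders fun _ => Bool).continuous_iff.2 ?_
  rintro _ ⟨y, n, rfl⟩
  rw [preimage_address_cylinder]
  exact isOpen_cell hσ y n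

theorem cell_nonempty [Nonempty X] (hσ : ∀ U, Continuous (σ U))
    (hsplit : ∀ U, IsOpen U → U.Nonempty → SurjOn (σ U) U univ) (y : ℕ → Bool) (n : ℕ) :
    (cell σ y n).Nonempty := by
  induction n with
  | zero => exact univ_nonempty
  | succ n ih =>
    obtain ⟨x, hx, hxy⟩ := hsplit _ (isOpen_cell hσ y n) ih (mem_univ (y n))
    exact ⟨x, hx, hxy⟩

theorem surjective_address [Nonempty X] [CompactSpace X] (hσ : ∀ U, Continuous (σ U))
    (hsplit : ∀ U, IsOpen U → U.Nonempty → SurjOn (σ U) U univ) : Surjective (address σ) := by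
  have hdense : Dense (range (address σ)) := by
    refine (isTopologicalBasis_cylinders fun _ => Bool).dense_iff.2 ?_
    rintro _ ⟨y, n, rfl⟩ -
    obtain ⟨x, hx⟩ := cell_nonempty hσ hsplit y n
    rw [← preimage_address_cylinder] at hx
    exact ⟨address σ x, hx, mem_range_self x⟩
  rw [← range_eq_univ, ← hdense.closure_eq,
    (isCompact_range (continuous_address hσ)).isClosed.closure_eq]

end BinarySplitting

section

variable {X : Type*} [TopologicalSpace X]

theorem ZeroDimensional.subtype (hX : ZeroDimensional X) (s : Set X) : ZeroDimensional s := by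
  obtain ⟨B, hB, hBclopen⟩ := hX
  refine ⟨(Subtype.val ⁻¹' ·) '' B, hB.isInducing IsInducing.subtypeVal, ?_⟩
  rintro _ ⟨t, ht, rfl⟩
  exact (hBclopen t ht).preimage continuous_subtype_val

theorem PerfectTop.subtype_of_isOpen (hX : PerfectTop X) {s : Set X} (hs : IsOpen s) :
    PerfectTop s := fun x hx => hX x (by simpa using hs.isOpenMap_subtype_val _ hx)

theorem ZeroDimensional.exists_continuous_bool_surjOn [T1Space X] (hZ : ZeroDimensional X)
    (hP : PerfectTop X) {U : Set X} (hU : IsOpen U) (hne : U.Nonempty) :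
    ∃ f : X → Bool, Continuous f ∧ SurjOn f U univ := by
  obtain ⟨x, hx⟩ := hne
  obtain ⟨x', hx', hx'x⟩ : ∃ x' ∈ U, x' ≠ x := by
    by_contra! h
    exact hP x ((Set.Nonempty.subset_singleton_iff ⟨x, hx⟩).1 h ▸ hU)
  obtain ⟨B, hB, hBclopen⟩ := hZ
  obtain ⟨W, hWB, hxW, hWx'⟩ :=
    hB.exists_subset_of_mem_open (mem_compl_singleton_iff.2 hx'x.symm) isOpen_compl_singleton
  classical
  have hf : Continuous fun z => decide (z ∈ W) :=
    (continuous_bool_rng true).2 (by convert hBclopen W hWB; ext; simp)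
  refine ⟨_, hf, ?_⟩
  rintro (_ | _) -
  · exact ⟨x', hx', by simpa using fun h => hWx' h rfl⟩
  · exact ⟨x, hx, by simpa using hxW⟩

theorem exists_continuous_surjective_natBool [T1Space X] [CompactSpace X] [Nonempty X]
    (hZ : ZeroDimensional X) (hP : PerfectTop X) :
    ∃ f : X → ℕ → Bool, Continuous f ∧ Surjective f := by
  have hsplit : ∀ U : Set X, ∃ f : X → Bool, Continuous f ∧
      (IsOpen U → U.Nonempty → SurjOn f U univ) := by
    intro U
    by_cases hU : IsOpen U ∧ U.Nonempty
    · obtain ⟨f, hf, hfU⟩ := hZ.exists_continuous_bool_surjOn hP hU.1 hU.2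
      exact ⟨f, hf, fun _ _ => hfU⟩
    · exact ⟨fun _ => true, continuous_const, fun h h' => absurd ⟨h, h'⟩ hU⟩
  choose σ hσ hσU using hsplit
  exact ⟨_, BinarySplitting.continuous_address hσ, BinarySplitting.surjective_address hσ hσU⟩

theorem IsCantorSpace.exists_continuous_surjective (hX : IsCantorSpace X) (K : Type*)
    [TopologicalSpace K] [Nonempty K] [CompactSpace K] [MetrizableSpace K] :
    ∃ f : X → K, Continuous f ∧ Surjective f := by
  obtain ⟨_, _, _, hZ, hP⟩ := hX
  obtain ⟨g, hg, hgs⟩ := exists_continuous_surjective_natBool hZ hP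
  let := metrizableSpaceMetric K
  obtain ⟨h, hh, hhs⟩ := exists_nat_bool_continuous_surjective_of_compact K
  exact ⟨h ∘ g, hh.comp hg, hhs.comp hgs⟩

theorem IsCantorSpace.of_isClopen (hX : IsCantorSpace X) {s : Set X} (hs : IsClopen s)
    (hne : s.Nonempty) : IsCantorSpace s := by
  obtain ⟨-, _, _, hZ, hP⟩ := hX
  exact ⟨hne.to_subtype, isCompact_iff_compactSpace.mp hs.isClosed.isCompact, inferInstance,
    hZ.subtype s, hP.subtype_of_isOpen hs.isOpen⟩

theorem exists_continuousMap_restrict_eq_of_isClopen {Y ι : Type*} [TopologicalSpace Y]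
    [Finite ι] {A : ι → Set X} (hA : ∀ i, IsClopen (A i)) (hdisj : Pairwise (Disjoint on A))
    (F : ∀ i, C(A i, Y)) (y₀ : Y) : ∃ f : C(X, Y), ∀ i, f.restrict (A i) = F i := by
  let S : Option ι → Set X := fun o => o.elim (⋃ i, A i)ᶜ A
  let φ : ∀ o, C(S o, Y)
    | none => .const _ y₀
    | some i => F i
  have hSdisj : Pairwise (Disjoint on S) := by
    rintro (_ | i) (_ | j) hij
    · exact absurd rfl hij
    · exact disjoint_compl_left.mono_right (subset_iUnion A j)
    · exact disjoint_compl_right.mono_left (subset_iUnion A i)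
    · exact hdisj fun h => hij (congrArg some h)
  have hφ (o o' : Option ι) (x : X) (hx : x ∈ S o) (hx' : x ∈ S o') :
      φ o ⟨x, hx⟩ = φ o' ⟨x, hx'⟩ := by
    obtain rfl : o = o' := by_contra fun h => disjoint_left.1 (hSdisj h) hx hx'
    rfl
  have hS (x : X) : ∃ o, S o ∈ 𝓝 x := by
    by_cases hx : ∃ i, x ∈ A i
    · obtain ⟨i, hi⟩ := hx
      exact ⟨some i, (hA i).isOpen.mem_nhds hi⟩
    · exact ⟨none, (isClopen_iUnion_of_finite hA).compl.isOpen.mem_nhds (by simpa using hx)⟩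
  exact ⟨.liftCover S φ hφ hS, fun i => ContinuousMap.liftCover_restrict (i := some i)⟩

end

theorem cantor_exists_surjection_mapping_clopen_pieces_general
    {X Y : Type*} [TopologicalSpace X] [TopologicalSpace Y]
    (hX : IsCantorSpace X) (hY : IsCantorSpace Y)
    (n : ℕ)
    (A : Fin n → Set X) (hAclopen : ∀ i, IsClopen (A i))
    (hAne : ∀ i, (A i).Nonempty)
    (hAdisj : Pairwise (Function.onFun Disjoint A))
    (B : Fin n → Set Y) (hBclopen : ∀ i, IsClopen (B i))
    (hBne : ∀ i, (B i).Nonempty)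
    (hBcover : (⋃ i, B i) = Set.univ) :
    ∃ f : X → Y, Continuous f ∧ Function.Surjective f ∧ ∀ i, f '' A i = B i := by
  obtain ⟨⟨y₀⟩, _, _, -, -⟩ := hY
  have hpiece (i : Fin n) : ∃ F : C(A i, B i), Surjective F := by
    have := (hBne i).to_subtype
    have := isCompact_iff_compactSpace.mp (hBclopen i).isClosed.isCompact
    obtain ⟨F, hF, hFs⟩ :=
      (hX.of_isClopen (hAclopen i) (hAne i)).exists_continuous_surjective (B i)
    exact ⟨⟨F, hF⟩, hFs⟩
  choose F hFs using hpiece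
  obtain ⟨f, hf⟩ := exists_continuousMap_restrict_eq_of_isClopen hAclopen hAdisj
    (fun i => ⟨Subtype.val ∘ F i, continuous_subtype_val.comp (F i).continuous⟩) y₀
  have himage (i : Fin n) : f '' A i = B i := by
    calc f '' A i = range (f.restrict (A i)) := by simp
      _ = Subtype.val '' range (F i) := by rw [hf i, ContinuousMap.coe_mk, range_comp]
      _ = B i := by rw [(hFs i).range_eq, image_univ, Subtype.range_coe]
  refine ⟨f, f.continuous, fun y => ?_, himage⟩
  obtain ⟨i, hi⟩ := mem_iUnion.1 (hBcover ▸ mem_univ y)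
  rw [← himage i] at hi
  obtain ⟨x, -, hx⟩ := hi
  exact ⟨x, hx⟩

/-- If `X` and `Y` are Cantor sets then for any positive `n`, mutually disjoint nonempty
clopen `A₁, …, Aₙ ⊆ X`, and nonempty clopen `B₁, …, Bₙ` covering `Y`, there exists a
continuous surjection `f : X → Y` with `f(Aᵢ) = Bᵢ` for each `i`. -/
theorem cantor_exists_surjection_mapping_clopen_pieces
    {X Y : Type*} [TopologicalSpace X] [TopologicalSpace Y]
    (hX : IsCantorSpace X) (hY : IsCantorSpace Y)
    (n : ℕ) (hn : 0 < n)
    (A : Fin n → Set X) (hAclopen : ∀ i, IsClopen (A i))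
    (hAne : ∀ i, (A i).Nonempty)
    (hAdisj : Pairwise (Function.onFun Disjoint A))
    (B : Fin n → Set Y) (hBclopen : ∀ i, IsClopen (B i))
    (hBne : ∀ i, (B i).Nonempty)
    (hBcover : (⋃ i, B i) = Set.univ) :
    ∃ f : X → Y, Continuous f ∧ Function.Surjective f ∧ ∀ i, f '' A i = B i :=
  cantor_exists_surjection_mapping_clopen_pieces_general hX hY n A hAclopen hAne hAdisj B hBclopen
    hBne hBcover
end

section
/- If X and Y are nondegenerate Peano continua, then for any positive integer n, any n distinct points x₁, …, xₙ ∈ X, and any n points y₁, …, yₙ ∈ Y, there exists a continuous surjection f : X → Y such that f(xᵢ) = yᵢ for each i. -/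
/-!
The heart of the matter is the Hahn–Mazurkiewicz theorem, in the form of a continuous loop
`σ : ℝ → Y` of period `1` onto `Y`. It is the uniform limit of the step functions
`t ↦ cₙ ⌊Lₙ t⌋`, where `cₙ` is an `Lₙ`-periodic chain with steps `< δₙ` that is `δₙ`-dense. To pass
to `cₙ₊₁`, each step of `cₙ` is replaced by a finer chain that stays inside a small preconnected
set (uniform local connectedness) and on the way visits the nearby points of a finite net;
padding these chains to a common length `m` makes the grids nest, `Lₙ₊₁ = Lₙ m`.

For `X` it suffices, by Tietze's theorem, to take a continuous `g : X → ℝ` with `g xᵢ = sᵢ` for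
preimages `σ sᵢ = yᵢ`, and with values `0` and `1` at two further points (a connected nontrivial
metric space is infinite). Then `g(X) ⊇ [0, 1]`, so `σ ∘ g` is onto.
-/

open Set Metric Filter Topology Function

universe u v

section EpsChain

variable {Z : Type*} [PseudoMetricSpace Z]

/-- After step `k` the chain stays at `q`, so that chains of different lengths fit on a common
grid. -/
structure IsEpsChain (δ : ℝ) (s : Set Z) (p q : Z) (k : ℕ) (a : ℕ → Z) : Prop where
  zero : a 0 = p
  eq_of_le : ∀ i, k ≤ i → a i = q
  dist_lt : ∀ i, dist (a i) (a (i + 1)) < δ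
  mem : ∀ i, a i ∈ s

def chainAppend (k : ℕ) (a b : ℕ → Z) (i : ℕ) : Z :=
  if i < k then a i else b (i - k)

namespace IsEpsChain

variable {δ : ℝ} {s t : Set Z} {p q r : Z} {k k' : ℕ} {a b : ℕ → Z}

theorem pos (h : IsEpsChain δ s p q k a) : 0 < δ :=
  dist_nonneg.trans_lt (h.dist_lt 0)

theorem mono_length (h : IsEpsChain δ s p q k a) (hk : k ≤ k') : IsEpsChain δ s p q k' a :=
  ⟨h.zero, fun i hi => h.eq_of_le i (hk.trans hi), h.dist_lt, h.mem⟩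

theorem mono_set (h : IsEpsChain δ s p q k a) (hst : s ⊆ t) : IsEpsChain δ t p q k a :=
  ⟨h.zero, h.eq_of_le, h.dist_lt, fun i => hst (h.mem i)⟩

theorem endpoint_mem_range (h : IsEpsChain δ s p q k a) : q ∈ range a :=
  ⟨k, h.eq_of_le k le_rfl⟩

theorem pair (hp : p ∈ s) (hq : q ∈ s) (hpq : dist p q < δ) :
    IsEpsChain δ s p q 1 (fun i => if i = 0 then p else q) := by
  refine ⟨rfl, fun i hi => if_neg (by omega), fun i => ?_, fun i => ?_⟩
  · rcases i with _ | i
    · simpa using hpq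
    · simpa using dist_nonneg.trans_lt hpq
  · split_ifs <;> assumption

theorem reverse (h : IsEpsChain δ s p q k a) : IsEpsChain δ s q p k (fun i => a (k - i)) := by
  refine ⟨by simpa using h.eq_of_le k le_rfl, fun i hi => by simpa [Nat.sub_eq_zero_of_le hi]
    using h.zero, fun i => ?_, fun i => h.mem _⟩
  rcases Nat.lt_or_ge i k with hik | hik
  · rw [show k - i = k - (i + 1) + 1 by omega, dist_comm]
    exact h.dist_lt _
  · simpa [Nat.sub_eq_zero_of_le hik, Nat.sub_eq_zero_of_le (Nat.le_succ_of_le hik)] using h.pos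

theorem append (h : IsEpsChain δ s p q k a) (h' : IsEpsChain δ s q r k' b) :
    IsEpsChain δ s p r (k + k') (chainAppend k a b) := by
  have hjoin : a k = b 0 := (h.eq_of_le k le_rfl).trans h'.zero.symm
  refine ⟨?_, fun i hi => ?_, fun i => ?_, fun i => ?_⟩
  · rcases Nat.eq_zero_or_pos k with rfl | hk
    · simpa [chainAppend, h.zero] using hjoin.symm
    · simp [chainAppend, hk, h.zero]
  · simpa [chainAppend, show ¬i < k by omega] using h'.eq_of_le (i - k) (by omega)
  · unfold chainAppend
    rcases lt_trichotomy (i + 1) k with hik | hik | hik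
    · simpa [hik, show i < k by omega] using h.dist_lt i
    · simpa [show i < k by omega, hik, ← hjoin] using h.dist_lt i
    · simpa [show ¬i < k by omega, show ¬i + 1 < k by omega, show i + 1 - k = i - k + 1 by omega]
        using h'.dist_lt (i - k)
  · unfold chainAppend
    split_ifs
    exacts [h.mem i, h'.mem (i - k)]

theorem union_range_subset_append (h : IsEpsChain δ s p q k a) (h' : IsEpsChain δ s q r k' b) :
    range a ∪ range b ⊆ range (chainAppend k a b) := by
  rintro _ (⟨i, rfl⟩ | ⟨i, rfl⟩)
  · rcases Nat.lt_or_ge i k with hik | hik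
    · exact ⟨i, if_pos hik⟩
    · exact ⟨k, by simp [chainAppend, h.eq_of_le i hik, h'.zero]⟩
  · exact ⟨i + k, by simp [chainAppend]⟩

end IsEpsChain

theorem IsPreconnected.exists_isEpsChain {s : Set Z} (hs : IsPreconnected s) {δ : ℝ}
    (hδ : 0 < δ) {p q : Z} (hp : p ∈ s) (hq : q ∈ s) : ∃ k a, IsEpsChain δ s p q k a := by
  refine hs.induction₂ (fun p q => ∃ k a, IsEpsChain δ s p q k a) (fun x hx => ?_)
    (fun _ _ _ _ _ _ ⟨k, a, h⟩ ⟨k', b, h'⟩ => ⟨_, _, h.append h'⟩)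
    (fun _ _ _ _ ⟨k, a, h⟩ => ⟨_, _, h.reverse⟩) hp hq
  filter_upwards [self_mem_nhdsWithin, nhdsWithin_le_nhds (ball_mem_nhds x hδ)] with y hy hyx
  exact ⟨1, _, .pair hx hy (by rwa [dist_comm])⟩

theorem exists_isEpsChain_visiting {δ : ℝ} {s D : Set Z} {p q : Z} (hD : D.Finite)
    (hpD : ∀ w ∈ D, ∃ k a, IsEpsChain δ s p w k a) (hpq : ∃ k a, IsEpsChain δ s p q k a) :
    ∃ k a, IsEpsChain δ s p q k a ∧ D ⊆ range a := by
  induction D, hD using Set.Finite.induction_on with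
  | empty => exact hpq.imp fun k ⟨a, ha⟩ => ⟨a, ha, empty_subset _⟩
  | @insert w D _ _ ih =>
    obtain ⟨k, a, ha, hDa⟩ := ih fun v hv => hpD v (mem_insert_of_mem w hv)
    obtain ⟨k', b, hb⟩ := hpD w (mem_insert w D)
    have hloop := hb.append hb.reverse
    refine ⟨_, _, hloop.append ha, insert_subset ?_ (hDa.trans ?_)⟩
    · exact hloop.union_range_subset_append ha
        (Or.inl (hb.union_range_subset_append hb.reverse (Or.inl hb.endpoint_mem_range)))
    · exact subset_union_right.trans (hloop.union_range_subset_append ha)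

end EpsChain

section ULC

variable (Z : Type*) [PseudoMetricSpace Z]

/-- `δ` is a modulus of uniform local connectedness for `ε`. -/
def IsULCModulus (δ ε : ℝ) : Prop :=
  ∀ u w : Z, dist u w < δ → ∃ S, IsPreconnected S ∧ u ∈ S ∧ w ∈ S ∧ S ⊆ closedBall u ε

theorem exists_isULCModulus [CompactSpace Z] [LocallyConnectedSpace Z] {ε : ℝ} (hε : 0 < ε) :
    ∃ δ, 0 < δ ∧ δ ≤ ε ∧ IsULCModulus Z δ ε := by
  have hV : ∀ z : Z, ∃ V, V ⊆ ball z (ε / 2) ∧ IsOpen V ∧ z ∈ V ∧ IsConnected V := fun z =>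
    locallyConnectedSpace_iff_subsets_isOpen_isConnected.mp ‹_› z _
      (ball_mem_nhds z (by positivity))
  choose V hVball hVopen hVmem hVconn using hV
  obtain ⟨δ, hδ, hLeb⟩ := lebesgue_number_lemma_of_metric isCompact_univ hVopen
    (fun z _ => mem_iUnion.mpr ⟨z, hVmem z⟩)
  refine ⟨min δ ε, lt_min hδ hε, min_le_right _ _, fun u w huw => ?_⟩
  obtain ⟨z, hz⟩ := hLeb u trivial
  have hu : u ∈ V z := hz (mem_ball_self hδ)
  refine ⟨V z, (hVconn z).isPreconnected, hu,
    hz (mem_ball_comm.mp (huw.trans_le (min_le_left _ _))), fun v hv => ?_⟩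
  calc dist v u ≤ dist v z + dist u z := dist_triangle_right v u z
    _ ≤ ε := by linarith [mem_ball.mp (hVball z hv), mem_ball.mp (hVball z hu)]

variable {Z}

theorem IsULCModulus.exists_isEpsChain_visiting {ε E δ : ℝ} (hE : IsULCModulus Z ε E)
    (hδ : 0 < δ) {u v : Z} (huv : dist u v < ε) {D : Set Z} (hD : D.Finite)
    (hDu : D ⊆ ball u ε) : ∃ k a, IsEpsChain δ (closedBall u E) u v k a ∧ D ⊆ range a := by
  have hjoin : ∀ w, dist u w < ε → ∃ k a, IsEpsChain δ (closedBall u E) u w k a := by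
    intro w huw
    obtain ⟨S, hS, huS, hwS, hSE⟩ := hE u w huw
    obtain ⟨k, a, ha⟩ := hS.exists_isEpsChain hδ huS hwS
    exact ⟨k, a, ha.mono_set hSE⟩
  exact _root_.exists_isEpsChain_visiting hD
    (fun w hw => hjoin w (by simpa [dist_comm] using hDu hw)) (hjoin v huv)

end ULC

theorem Function.Periodic.finite_range_of_int {α : Type*} {f : ℤ → α} {L : ℤ} (h : Periodic f L)
    (hL : 0 < L) : (range f).Finite := by
  rw [← h.image_Icc hL 0]
  exact (finite_Icc _ _).image f

theorem Int.exists_eq_mul_add_of_pos {m : ℕ} (hm : 0 < m) (i : ℤ) :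
    ∃ (j : ℤ) (r : ℕ), r < m ∧ i = m * j + r :=
  ⟨i / m, (i % m).toNat, by have := Int.emod_lt_of_pos i (by omega : (0 : ℤ) < m); omega, by
    rw [Int.toNat_of_nonneg (Int.emod_nonneg _ (by omega)), Int.mul_ediv_add_emod]⟩

section glueChains

variable {α : Type*} {m : ℕ} {A : ℤ → ℕ → α}

/-- The block `[m * j, m * (j + 1))` runs through the first `m` points of `A j`. -/
def glueChains (m : ℕ) (A : ℤ → ℕ → α) (i : ℤ) : α :=
  A (i / m) (i % m).toNat

theorem glueChains_mul_add (A : ℤ → ℕ → α) (j : ℤ) {r : ℕ} (hr : r < m) :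
    glueChains m A (m * j + r) = A j r := by
  have hm : (m : ℤ) ≠ 0 := by omega
  have hrm : (r : ℤ) < m := by exact_mod_cast hr
  rw [glueChains, add_comm, mul_comm, Int.add_mul_ediv_right _ _ hm, Int.add_mul_emod_self_right,
    Int.ediv_eq_zero_of_lt (by omega) hrm, Int.emod_eq_of_lt (by omega) hrm, zero_add,
    Int.toNat_natCast]

theorem Function.Periodic.glueChains {L : ℤ} (h : Periodic A L) (hm : 0 < m) :
    Periodic (glueChains m A) (L * m) := by
  intro i
  rw [_root_.glueChains, _root_.glueChains, Int.add_mul_ediv_right _ _ (by omega),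
    Int.add_mul_emod_self_right, h]

end glueChains

section DenseLoop

variable {Z : Type*} [PseudoMetricSpace Z]

structure IsDenseLoop (δ : ℝ) (L : ℕ) (c : ℤ → Z) : Prop where
  pos : 0 < L
  periodic : Periodic c L
  dist_succ_lt : ∀ j, dist (c j) (c (j + 1)) < δ
  dense : ∀ z, ∃ j, dist (c j) z < δ

variable {δ : ℝ} {m : ℕ} {A : ℤ → ℕ → Z} {S : ℤ → Set Z} {c : ℤ → Z}

theorem dist_glueChains_succ_lt (hm : 0 < m)
    (hA : ∀ j, IsEpsChain δ (S j) (c j) (c (j + 1)) m (A j)) (i : ℤ) :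
    dist (glueChains m A i) (glueChains m A (i + 1)) < δ := by
  obtain ⟨j, r, hr, rfl⟩ := Int.exists_eq_mul_add_of_pos hm i
  rw [glueChains_mul_add A j hr]
  rcases (by omega : r + 1 < m ∨ r + 1 = m) with h | h
  · rw [add_assoc, ← Nat.cast_succ, glueChains_mul_add A j h]
    exact (hA j).dist_lt r
  · have hnext : m * j + r + 1 = m * (j + 1) + (0 : ℕ) := by
      rw [← h]
      push_cast
      ring
    rw [hnext, glueChains_mul_add A _ hm, (hA (j + 1)).zero, ← (hA j).eq_of_le (r + 1) h.ge]
    exact (hA j).dist_lt r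

theorem range_subset_range_glueChains (hm : 0 < m)
    (hA : ∀ j, IsEpsChain δ (S j) (c j) (c (j + 1)) m (A j)) (j : ℤ) :
    range (A j) ⊆ range (glueChains m A) := by
  rintro _ ⟨r, rfl⟩
  rcases lt_or_ge r m with h | h
  · exact ⟨m * j + r, glueChains_mul_add A j h⟩
  · exact ⟨m * (j + 1) + (0 : ℕ), by
      rw [glueChains_mul_add A _ hm, (hA (j + 1)).zero, (hA j).eq_of_le r h]⟩

theorem IsDenseLoop.exists_refinement [CompactSpace Z] {ε δ E : ℝ} {L : ℕ} {c : ℤ → Z}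
    (hc : IsDenseLoop ε L c) (hE : IsULCModulus Z ε E) (hδ : 0 < δ) :
    ∃ m : ℕ, 0 < m ∧ ∃ c' : ℤ → Z, IsDenseLoop δ (L * m) c' ∧
      ∀ i, dist (c' i) (c (i / m)) ≤ E := by
  obtain ⟨t, -, ht, hcover⟩ := finite_cover_balls_of_compact (isCompact_univ (X := Z)) hδ
  have hpiece : ∀ u v : Z, ∃ k a, dist u v < ε →
      IsEpsChain δ (closedBall u E) u v k a ∧ t ∩ ball u ε ⊆ range a := fun u v => by
    by_cases huv : dist u v < ε
    · obtain ⟨k, a, h⟩ := hE.exists_isEpsChain_visiting hδ huv (ht.subset inter_subset_left)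
        inter_subset_right
      exact ⟨k, a, fun _ => h⟩
    · exact ⟨0, fun _ => u, fun h => absurd h huv⟩
  choose K B hB using hpiece
  -- The pieces depend only on the pair `(c j, c (j + 1))`: hence they are periodic in `j`, and
  -- their lengths take finitely many values.
  have hpair : Periodic (fun j => (c j, c (j + 1))) L := fun j => by
    simp only [hc.periodic j, add_right_comm j (L : ℤ), hc.periodic (j + 1)]
  obtain ⟨m₀, hm₀⟩ := ((hpair.comp (uncurry K)).finite_range_of_int
    (by exact_mod_cast hc.pos)).bddAbove
  set A : ℤ → ℕ → Z := fun j => B (c j) (c (j + 1))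
  have hA : ∀ j, IsEpsChain δ (closedBall (c j) E) (c j) (c (j + 1)) (m₀ + 1) (A j) := fun j =>
    (hB _ _ (hc.dist_succ_lt j)).1.mono_length ((hm₀ ⟨j, rfl⟩).trans m₀.le_succ)
  refine ⟨m₀ + 1, m₀.succ_pos, glueChains (m₀ + 1) A, ⟨Nat.mul_pos hc.pos m₀.succ_pos, ?_,
    dist_glueChains_succ_lt m₀.succ_pos hA, fun z => ?_⟩, fun i => (hA (i / (m₀ + 1 : ℕ))).mem _⟩
  · rw [Nat.cast_mul]
    exact (hpair.comp (uncurry B)).glueChains m₀.succ_pos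
  · obtain ⟨w, hwt, hzw⟩ := mem_iUnion₂.mp (hcover (mem_univ z))
    obtain ⟨j, hj⟩ := hc.dense w
    obtain ⟨i, hi⟩ := range_subset_range_glueChains m₀.succ_pos hA j
      ((hB _ _ (hc.dist_succ_lt j)).2 ⟨hwt, mem_ball'.mpr hj⟩)
    exact ⟨i, by rw [hi]; exact mem_ball'.mp hzw⟩

end DenseLoop

theorem exists_div_two_pow_lt (K : ℝ) {ε : ℝ} (hε : 0 < ε) : ∃ n : ℕ, K / 2 ^ n < ε := by
  obtain ⟨n, hn⟩ := pow_unbounded_of_one_lt (K / ε) one_lt_two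
  refine ⟨n, (div_lt_iff₀ (by positivity)).mpr ?_⟩
  rwa [div_lt_iff₀ hε, mul_comm] at hn

theorem exists_seq_of_forall_exists_succ {α : Type*} {P : ℕ → α → Prop}
    {R : ℕ → α → α → Prop} {a : α} (h0 : P 0 a) (h : ∀ n a, P n a → ∃ b, P (n + 1) b ∧ R n a b) :
    ∃ f : ℕ → α, ∀ n, P n (f n) ∧ R n (f n) (f (n + 1)) := by
  have h' : ∀ n a, ∃ b, P n a → P (n + 1) b ∧ R n a b := fun n a => by
    by_cases ha : P n a
    · exact (h n a ha).imp fun b hb _ => hb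
    · exact ⟨a, fun h => absurd h ha⟩
  choose g hg using h'
  let f : ℕ → α := fun n => Nat.rec a g n
  have hf : ∀ n, P n (f n) := fun n => by
    induction n with
    | zero => exact h0
    | succ n ih => exact (hg n _ ih).1
  exact ⟨f, fun n => ⟨hf n, (hg n _ (hf n)).2⟩⟩

theorem exists_uniformContinuous_limit {α β : Type*} [PseudoMetricSpace α] [PseudoMetricSpace β]
    [CompleteSpace β] {F : ℕ → α → β} {C : ℝ}
    (hF : ∀ n t, dist (F n t) (F (n + 1) t) ≤ C / 2 ^ n)
    (hosc : ∀ n, ∃ η > 0, ∀ s t, dist s t < η → dist (F n s) (F n t) ≤ C / 2 ^ n) :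
    ∃ σ : α → β, UniformContinuous σ ∧ (∀ t, Tendsto (F · t) atTop (𝓝 (σ t))) ∧
      ∀ n t, dist (F n t) (σ t) ≤ 2 * C / 2 ^ n := by
  have hF' : ∀ t n, dist (F n t) (F (n + 1) t) ≤ 2 * C / 2 / 2 ^ n := fun t n => by
    simpa [mul_div_cancel_left₀] using hF n t
  choose σ hσ using fun t => cauchySeq_tendsto_of_complete (cauchySeq_of_le_geometric_two (hF' t))
  have hbound : ∀ n t, dist (F n t) (σ t) ≤ 2 * C / 2 ^ n := fun n t =>
    dist_le_of_le_geometric_two_of_tendsto (hF' t) (hσ t) n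
  refine ⟨σ, Metric.uniformContinuous_iff.mpr fun ε hε => ?_, hσ, hbound⟩
  obtain ⟨n, hn⟩ := exists_div_two_pow_lt (5 * C) hε
  obtain ⟨η, hη, hFη⟩ := hosc n
  refine ⟨η, hη, fun {s t} hst => ?_⟩
  calc dist (σ s) (σ t) ≤ dist (F n s) (σ s) + dist (F n s) (F n t) + dist (F n t) (σ t) := by
        rw [dist_comm (F n s) (σ s)]
        exact dist_triangle4 _ _ _ _
    _ ≤ 2 * C / 2 ^ n + C / 2 ^ n + 2 * C / 2 ^ n := by
        gcongr
        exacts [hbound n s, hFη s t hst, hbound n t]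
    _ = 5 * C / 2 ^ n := by ring
    _ < ε := hn

section StepFunction

variable {Z : Type*} [PseudoMetricSpace Z] {δ : ℝ} {L : ℕ} {c : ℤ → Z}

theorem dist_comp_floor_lt (hc : ∀ j, dist (c j) (c (j + 1)) < δ) {x y : ℝ} (hxy : |x - y| < 1) :
    dist (c ⌊x⌋) (c ⌊y⌋) < δ := by
  have hxy' := abs_lt.mp hxy
  have h₁ : ⌊x⌋ ≤ ⌊y⌋ + 1 := Int.floor_add_one y ▸ Int.floor_le_floor (by linarith)
  have h₂ : ⌊y⌋ ≤ ⌊x⌋ + 1 := Int.floor_add_one x ▸ Int.floor_le_floor (by linarith)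
  rcases (by omega : ⌊x⌋ = ⌊y⌋ ∨ ⌊y⌋ = ⌊x⌋ + 1 ∨ ⌊x⌋ = ⌊y⌋ + 1) with h | h | h
  · rw [h, dist_self]
    exact dist_nonneg.trans_lt (hc 0)
  · rw [h]
    exact hc _
  · rw [h, dist_comm]
    exact hc _

theorem IsDenseLoop.dist_floor_lt (hc : IsDenseLoop δ L c) {s t : ℝ} (hst : dist s t < 1 / L) :
    dist (c ⌊L * s⌋) (c ⌊L * t⌋) < δ := by
  have hL : (0 : ℝ) < L := by exact_mod_cast hc.pos
  refine dist_comp_floor_lt hc.dist_succ_lt ?_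
  rw [← mul_sub, abs_mul, Nat.abs_cast, ← Real.dist_eq]
  rwa [lt_div_iff₀' hL] at hst

theorem IsDenseLoop.periodic_floor (hc : IsDenseLoop δ L c) :
    Periodic (fun t : ℝ => c ⌊L * t⌋) 1 := fun t => by
  simp only [mul_add, mul_one, Int.floor_add_natCast]
  exact hc.periodic _

theorem IsDenseLoop.floor_div (hc : IsDenseLoop δ L c) (j : ℤ) : c ⌊L * (j / L : ℝ)⌋ = c j := by
  rw [mul_div_cancel₀ _ (by exact_mod_cast hc.pos.ne'), Int.floor_intCast]

theorem dist_floor_mul_le {c' : ℤ → Z} {m : ℕ} {E : ℝ} (hm : 0 < m)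
    (hc' : ∀ i, dist (c' i) (c (i / m)) ≤ E) (t : ℝ) :
    dist (c' ⌊((L * m : ℕ) : ℝ) * t⌋) (c ⌊L * t⌋) ≤ E := by
  rw [show ((L * m : ℕ) : ℝ) * t = m * (L * t) by push_cast; ring]
  simpa only [Int.natCast_mul_floor_div_cancel hm.ne'] using hc' ⌊(m : ℝ) * (L * t)⌋

end StepFunction

section HahnMazurkiewicz

variable (Z : Type*) [PseudoMetricSpace Z] [CompactSpace Z] [ConnectedSpace Z]
  [LocallyConnectedSpace Z]

theorem exists_isULCModulus_seq :
    ∃ D > 0, ∃ δ : ℕ → ℝ, (∀ u w : Z, dist u w < δ 0) ∧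
      ∀ n, 0 < δ n ∧ δ n ≤ D / 2 ^ n ∧ IsULCModulus Z (δ n) (D / 2 ^ n) := by
  obtain ⟨C, hC⟩ := isBounded_iff.mp (isCompact_univ (X := Z)).isBounded
  obtain ⟨q⟩ := ConnectedSpace.toNonempty (α := Z)
  have hD : ∀ u w : Z, dist u w < C + 1 := fun u w => (hC trivial trivial).trans_lt (lt_add_one C)
  have hDpos : 0 < C + 1 := dist_nonneg.trans_lt (hD q q)
  have hδ : ∀ n : ℕ, ∃ δ, (n = 0 → ∀ u w : Z, dist u w < δ) ∧
      0 < δ ∧ δ ≤ (C + 1) / 2 ^ n ∧ IsULCModulus Z δ ((C + 1) / 2 ^ n) := by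
    rintro (_ | n)
    · refine ⟨C + 1, fun _ => hD, hDpos, by simp, fun u w _ => ⟨univ, isPreconnected_univ,
        trivial, trivial, fun v _ => ?_⟩⟩
      simpa [dist_comm] using (hD v u).le
    · obtain ⟨δ, hδ⟩ := exists_isULCModulus Z (by positivity : 0 < (C + 1) / 2 ^ (n + 1))
      exact ⟨δ, fun h => absurd h n.succ_ne_zero, hδ⟩
  choose δ hδ using hδ
  exact ⟨C + 1, hDpos, δ, (hδ 0).1 rfl, fun n => (hδ n).2⟩

theorem exists_isDenseLoop_seq :
    ∃ D > 0, ∃ (δ : ℕ → ℝ) (L : ℕ → ℕ) (c : ℕ → ℤ → Z), ∀ n,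
      IsDenseLoop (δ n) (L n) (c n) ∧ δ n ≤ D / 2 ^ n ∧
      ∀ t : ℝ, dist (c n ⌊L n * t⌋) (c (n + 1) ⌊L (n + 1) * t⌋) ≤ D / 2 ^ n := by
  obtain ⟨D, hD, δ, hδ0, hδ⟩ := exists_isULCModulus_seq Z
  obtain ⟨q⟩ := ConnectedSpace.toNonempty (α := Z)
  obtain ⟨Lc, hLc⟩ := exists_seq_of_forall_exists_succ
    (P := fun n (Lc : ℕ × (ℤ → Z)) => IsDenseLoop (δ n) Lc.1 Lc.2)
    (R := fun n Lc Lc' => ∃ m, 0 < m ∧ Lc'.1 = Lc.1 * m ∧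
      ∀ i, dist (Lc'.2 i) (Lc.2 (i / m)) ≤ D / 2 ^ n)
    (a := (1, fun _ => q))
    ⟨one_pos, fun _ => rfl, fun _ => by simpa using (hδ 0).1, fun z => ⟨0, hδ0 q z⟩⟩
    (fun n Lc hc => by
      obtain ⟨m, hm, c', hc', hdist⟩ := hc.exists_refinement (hδ n).2.2 (hδ (n + 1)).1
      exact ⟨(Lc.1 * m, c'), hc', m, hm, rfl, hdist⟩)
  refine ⟨D, hD, δ, fun n => (Lc n).1, fun n => (Lc n).2, fun n => ⟨(hLc n).1, (hδ n).2.1,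
    fun t => ?_⟩⟩
  obtain ⟨m, hm, hL, hdist⟩ := (hLc n).2
  dsimp only
  rw [dist_comm, hL]
  exact dist_floor_mul_le hm hdist t

end HahnMazurkiewicz

/-- **Hahn–Mazurkiewicz theorem**, in the form of a loop filling a Peano continuum. -/
theorem exists_continuous_periodic_surjective (Z : Type*) [MetricSpace Z] [CompactSpace Z]
    [ConnectedSpace Z] [LocallyConnectedSpace Z] :
    ∃ σ : ℝ → Z, Continuous σ ∧ Periodic σ 1 ∧ Surjective σ := by
  obtain ⟨D, hD, δ, L, c, hc⟩ := exists_isDenseLoop_seq Z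
  obtain ⟨σ, hσ, hlim, hbound⟩ := exists_uniformContinuous_limit (C := D)
    (F := fun n (t : ℝ) => c n ⌊L n * t⌋) (fun n => (hc n).2.2)
    (fun n => ⟨1 / L n, by have := (hc n).1.pos; positivity,
      fun s t hst => ((hc n).1.dist_floor_lt hst).le.trans (hc n).2.1⟩)
  have hper : Periodic σ 1 := fun t => tendsto_nhds_unique
    (by simpa only [fun n => (hc n).1.periodic_floor t] using hlim (t + 1)) (hlim t)
  have hdense : DenseRange σ := by
    refine Metric.denseRange_iff.mpr fun z ε hε => ?_
    obtain ⟨n, hn⟩ := exists_div_two_pow_lt (3 * D) hε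
    obtain ⟨j, hj⟩ := (hc n).1.dense z
    refine ⟨j / L n, ?_⟩
    have hσj := hbound n (j / L n)
    rw [(hc n).1.floor_div] at hσj
    calc dist z (σ (j / L n)) ≤ dist z (c n j) + dist (c n j) (σ (j / L n)) := dist_triangle _ _ _
      _ ≤ D / 2 ^ n + 2 * D / 2 ^ n := by
          rw [dist_comm]
          gcongr
          exact hj.le.trans (hc n).2.1
      _ = 3 * D / 2 ^ n := by ring
      _ < ε := hn
  refine ⟨σ, hσ.continuous, hper, range_eq_univ.mp ?_⟩
  rw [← hdense.closure_range,
    (hper.compact_of_continuous one_ne_zero hσ.continuous).isClosed.closure_eq]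

theorem exists_continuous_forall_apply_eq {X : Type u} {Y : Type v} {ι : Type*}
    [TopologicalSpace X] [NormalSpace X] [T2Space X] [TopologicalSpace Y] [TietzeExtension.{u, v} Y]
    [Finite ι] {e : ι → X} (he : Injective e) (v : ι → Y) :
    ∃ g : X → Y, Continuous g ∧ ∀ i, g (e i) = v i := by
  let _ : TopologicalSpace ι := ⊥
  have : DiscreteTopology ι := ⟨rfl⟩
  obtain ⟨g, hg⟩ := ContinuousMap.exists_extension'
    (continuous_of_discreteTopology.isClosedEmbedding he) ⟨v, continuous_of_discreteTopology⟩
  exact ⟨g, g.continuous, congr_fun hg⟩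

theorem peano_exists_surjection_through_points_general
    {X Y : Type*} [MetricSpace X] [ConnectedSpace X] [Nontrivial X]
    [MetricSpace Y] [CompactSpace Y] [ConnectedSpace Y]
    [LocallyConnectedSpace Y]
    (n : ℕ) (x : Fin n → X) (hx : Function.Injective x)
    (y : Fin n → Y) :
    ∃ f : X → Y, Continuous f ∧ Function.Surjective f ∧ ∀ i, f (x i) = y i := by
  obtain ⟨σ, hσ, hper, hsurj⟩ := exists_continuous_periodic_surjective Y
  choose s hs using fun i => hsurj (y i)
  have : Infinite X := PreconnectedSpace.infinite
  let z := (finite_range x).infinite_compl.natEmbedding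
  obtain ⟨g, hg, hge⟩ := exists_continuous_forall_apply_eq
    (e := Sum.elim x fun k : Fin 2 => (z k : X))
    (hx.sumElim (Subtype.val_injective.comp (z.injective.comp Fin.val_injective))
      fun i k h => (z k).2 ⟨i, h⟩)
    (Sum.elim s fun k => k)
  have hIcc : Icc 0 1 ⊆ range g := (isPreconnected_range hg).Icc_subset
    ⟨_, (hge (.inr 0)).trans (by simp)⟩ ⟨_, (hge (.inr 1)).trans (by simp)⟩
  refine ⟨σ ∘ g, hσ.comp hg, fun w => ?_, fun i => (congrArg σ (hge (.inl i))).trans (hs i)⟩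
  obtain ⟨t, ht, rfl⟩ : w ∈ σ '' Icc 0 1 := by
    rw [← zero_add (1 : ℝ), hper.image_Icc one_pos 0, hsurj.range_eq]
    trivial
  obtain ⟨u, rfl⟩ := hIcc ht
  exact ⟨u, rfl⟩

/-- If `X` and `Y` are nondegenerate Peano continua (nonempty compact connected locally
connected metric spaces with more than one point), then for any positive `n`, distinct
points `x₁, …, xₙ ∈ X` and points `y₁, …, yₙ ∈ Y`, there exists a continuous surjection
`f : X → Y` with `f(xᵢ) = yᵢ` for each `i`. -/
theorem peano_exists_surjection_through_points
    {X Y : Type*} [MetricSpace X] [CompactSpace X] [ConnectedSpace X]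
    [LocallyConnectedSpace X] [Nontrivial X]
    [MetricSpace Y] [CompactSpace Y] [ConnectedSpace Y]
    [LocallyConnectedSpace Y] [Nontrivial Y]
    (n : ℕ) (hn : 0 < n) (x : Fin n → X) (hx : Function.Injective x)
    (y : Fin n → Y) :
    ∃ f : X → Y, Continuous f ∧ Function.Surjective f ∧ ∀ i, f (x i) = y i :=
  peano_exists_surjection_through_points_general n x hx y
end

section
/- For any Cantor set X and any nondegenerate Peano continuum Y, there exists a partition of X whose decomposition space is homeomorphic to Y. -/
/-- `D` is a partition of `X` into nonempty sets. -/
structure IsPartition {X : Type*} (D : Set (Set X)) : Prop where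
  nonempty : ∀ s ∈ D, s.Nonempty
  cover : ∀ x : X, ∃ s ∈ D, x ∈ s
  disj : ∀ s ∈ D, ∀ t ∈ D, s ≠ t → Disjoint s t

/-- The natural map sending a point of `X` to the member of the partition `D`
containing it. -/
noncomputable def decompMap {X : Type*} (D : Set (Set X))
    (hcover : ∀ x : X, ∃ s ∈ D, x ∈ s) (x : X) : D :=
  ⟨(hcover x).choose, (hcover x).choose_spec.1⟩

/-- The decomposition (quotient) topology on a partition `D` of `X`: the topology
coinduced by the natural map `X → D`; a family `𝒰 ⊆ D` is open iff the union of its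
members is open in `X`. -/
noncomputable def decompTop {X : Type*} [TopologicalSpace X] (D : Set (Set X))
    (hcover : ∀ x : X, ∃ s ∈ D, x ∈ s) : TopologicalSpace D :=
  TopologicalSpace.coinduced (decompMap D hcover) ‹_›

open Set Function Topology

/-!
Fibres of a continuous surjection from a compact space onto a Hausdorff space form a partition
whose decomposition space is the target, so it suffices to map the Cantor set `X` continuously
onto `Y`. Since `X` is zero-dimensional and perfect, every nonempty clopen set splits into two
nonempty clopen halves. Splitting level by level gives a binary tree of nonempty clopen cells;
recording the branch a point follows maps `X` continuously onto `ℕ → Bool`, surjectively because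
nested nonempty closed sets of a compact space meet. The Hausdorff–Alexandroff theorem maps
`ℕ → Bool` onto every nonempty compact metric space.
-/

section SplittingScheme

variable {X : Type*}

/-- A word lists its newest letter first: the cell of `b :: w` is the `b`-half of the cell of
`w`. -/
def splitCell (split : Set X → Set X) : List Bool → Set X
  | [] => univ
  | true :: w => splitCell split w ∩ split (splitCell split w)
  | false :: w => splitCell split w \ split (splitCell split w)

/-- The `n`-th letter of `splitCode split x` says which half of its level-`n` cell contains
`x`. -/
noncomputable def splitCode (split : Set X → Set X) (x : X) (n : ℕ) : Bool :=
  (⋃ w ∈ {w : List Bool | w.length = n}, splitCell split (true :: w)).boolIndicator x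

def initialWord (b : ℕ → Bool) : ℕ → List Bool
  | 0 => []
  | n + 1 => b n :: initialWord b n

lemma length_initialWord (b : ℕ → Bool) (n : ℕ) : (initialWord b n).length = n := by
  induction n with
  | zero => rfl
  | succ n ih => simp [initialWord, ih]

variable {split : Set X → Set X}

lemma splitCell_cons_subset (b : Bool) (w : List Bool) :
    splitCell split (b :: w) ⊆ splitCell split w := by
  cases b
  · exact sdiff_subset
  · exact inter_subset_left

lemma eq_of_mem_splitCell {x : X} :
    ∀ {w w' : List Bool}, w.length = w'.length →
      x ∈ splitCell split w → x ∈ splitCell split w' → w = w'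
  | [], [], _, _, _ => rfl
  | b :: w, b' :: w', hlen, hx, hx' => by
    have hww' : w = w' := eq_of_mem_splitCell (Nat.succ.inj hlen)
      (splitCell_cons_subset b w hx) (splitCell_cons_subset b' w' hx')
    subst hww'
    cases b <;> cases b' <;> simp_all [splitCell]

lemma splitCode_eq {x : X} {b : ℕ → Bool}
    (hx : ∀ n, x ∈ splitCell split (initialWord b n)) : splitCode split x = b := by
  funext n
  have hxn : x ∈ splitCell split (b n :: initialWord b n) := hx (n + 1)
  cases hb : b n
  · rw [splitCode, ← notMem_iff_boolIndicator]
    simp only [mem_iUnion, mem_ofPred_eq, not_exists]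
    intro w hw hxw
    cases eq_of_mem_splitCell (by simp [hw, length_initialWord]) hxw (hb ▸ hxn)
  · rw [splitCode, ← mem_iff_boolIndicator]
    exact mem_biUnion (length_initialWord b n) (hb ▸ hxn)

variable [TopologicalSpace X]

def IsClopenSplitting (split : Set X → Set X) : Prop :=
  ∀ C : Set X, C.Nonempty → IsClopen C →
    IsClopen (split C) ∧ (C ∩ split C).Nonempty ∧ (C \ split C).Nonempty

lemma splitCell_nonempty_isClopen [Nonempty X] (hsplit : IsClopenSplitting split) :
    ∀ w : List Bool, (splitCell split w).Nonempty ∧ IsClopen (splitCell split w)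
  | [] => ⟨univ_nonempty, isClopen_univ⟩
  | b :: w => by
    obtain ⟨hne, hcl⟩ := splitCell_nonempty_isClopen hsplit w
    obtain ⟨hAcl, hin, hout⟩ := hsplit _ hne hcl
    cases b
    · exact ⟨hout, hcl.diff hAcl⟩
    · exact ⟨hin, hcl.inter hAcl⟩

lemma continuous_splitCode [Nonempty X] (hsplit : IsClopenSplitting split) :
    Continuous (splitCode split) :=
  continuous_pi fun n => (continuous_boolIndicator_iff_isClopen _).2 <|
    (List.finite_length_eq Bool n).isClopen_biUnion fun w _ =>
      (splitCell_nonempty_isClopen hsplit (true :: w)).2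

lemma surjective_splitCode [CompactSpace X] [Nonempty X] (hsplit : IsClopenSplitting split) :
    Surjective (splitCode split) := by
  intro b
  obtain ⟨x, hx⟩ := IsCompact.nonempty_iInter_of_sequence_nonempty_isCompact_isClosed
    (fun n => splitCell split (initialWord b n))
    (fun n => splitCell_cons_subset (b n) (initialWord b n))
    (fun n => (splitCell_nonempty_isClopen hsplit _).1) isClosed_univ.isCompact
    (fun n => (splitCell_nonempty_isClopen hsplit _).2.1)
  exact ⟨x, splitCode_eq (mem_iInter.1 hx)⟩

theorem exists_continuous_surjective_natBool_of_splitting [CompactSpace X] [Nonempty X]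
    (h : ∀ C : Set X, C.Nonempty → IsClopen C →
      ∃ A, IsClopen A ∧ (C ∩ A).Nonempty ∧ (C \ A).Nonempty) :
    ∃ g : X → ℕ → Bool, Continuous g ∧ Surjective g := by
  choose! split hsplit using h
  exact ⟨splitCode split, continuous_splitCode hsplit, surjective_splitCode hsplit⟩

end SplittingScheme

theorem exists_isClopen_inter_diff_nonempty {X : Type*} [TopologicalSpace X] [T1Space X]
    (hX₀ : ZeroDimensional X) (hXp : PerfectTop X) {C : Set X} (hne : C.Nonempty)
    (hC : IsClopen C) : ∃ A, IsClopen A ∧ (C ∩ A).Nonempty ∧ (C \ A).Nonempty := by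
  obtain ⟨x, hx⟩ := hne
  obtain ⟨y, hy, hyx⟩ : ∃ y ∈ C, y ≠ x := by
    by_contra! h
    exact hXp x (eq_singleton_iff_unique_mem.2 ⟨hx, h⟩ ▸ hC.isOpen)
  obtain ⟨B, hB, hBclopen⟩ := hX₀
  obtain ⟨U, hU, hxU, hUy⟩ := hB.exists_subset_of_mem_open hyx.symm isOpen_ne
  exact ⟨U, hBclopen U hU, ⟨x, hx, hxU⟩, ⟨y, hy, fun hyU => hUy hyU rfl⟩⟩

theorem IsCantorSpace.exists_continuous_surjective_natBool {X : Type*} [TopologicalSpace X]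
    (hX : IsCantorSpace X) : ∃ g : X → ℕ → Bool, Continuous g ∧ Surjective g := by
  obtain ⟨_, _, _, hX₀, hXp⟩ := hX
  exact exists_continuous_surjective_natBool_of_splitting fun _ =>
    exists_isClopen_inter_diff_nonempty hX₀ hXp

section Decomposition

variable {X : Type*} {D : Set (Set X)}

lemma decompMap_eq_of_mem (hD : IsPartition D) {x : X} {s : D} (hx : x ∈ (s : Set X)) :
    decompMap D hD.cover x = s := by
  by_contra hne
  exact disjoint_left.1 (hD.disj _ (decompMap D hD.cover x).2 s s.2 (Subtype.coe_ne_coe.2 hne))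
    (hD.cover x).choose_spec.2 hx

lemma decompMap_surjective (hD : IsPartition D) : Surjective (decompMap D hD.cover) :=
  fun s => (hD.nonempty s s.2).elim fun _ hx => ⟨_, decompMap_eq_of_mem hD hx⟩

lemma isPartition_range_preimage_singleton {Y : Type*} {f : X → Y} (hf : Surjective f) :
    IsPartition (range fun y => f ⁻¹' {y}) where
  nonempty := by
    rintro _ ⟨y, rfl⟩
    exact hf.nonempty_preimage.2 (singleton_nonempty y)
  cover x := ⟨f ⁻¹' {f x}, mem_range_self _, rfl⟩
  disj := by
    rintro _ ⟨y, rfl⟩ _ ⟨y', rfl⟩ hne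
    have hyy' : Disjoint ({y} : Set Y) {y'} := disjoint_singleton.2 fun h => hne (h ▸ rfl)
    exact hyy'.preimage f

theorem nonempty_homeomorph_decompTop_fibers [TopologicalSpace X] [CompactSpace X] {Y : Type*}
    [TopologicalSpace Y] [T2Space Y] {f : X → Y} (hfc : Continuous f) (hfs : Surjective f) :
    Nonempty (@Homeomorph (range fun y => f ⁻¹' {y}) Y
      (decompTop _ (isPartition_range_preimage_singleton hfs).cover) _) := by
  have hD := isPartition_range_preimage_singleton hfs
  let := decompTop _ hD.cover
  have hfib : Injective fun y => f ⁻¹' {y} := (preimage_injective.2 hfs).comp singleton_injective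
  let e := (Equiv.ofInjective _ hfib).symm
  have he : e ∘ decompMap _ hD.cover = f := by
    funext x
    exact e.eq_symm_apply.1
      (decompMap_eq_of_mem hD (s := e.symm (f x)) (mem_singleton (f x)))
  have he_cont : Continuous e := continuous_coinduced_dom.2 (by rwa [he])
  have : CompactSpace (range fun y => f ⁻¹' {y}) :=
    (decompMap_surjective hD).compactSpace continuous_coinduced_rng
  exact ⟨he_cont.homeoOfEquivCompactToT2⟩

end Decomposition

theorem cantor_has_decomposition_homeomorphic_to_peano_general
    {X Y : Type*} [TopologicalSpace X] (hX : IsCantorSpace X)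
    [MetricSpace Y] [CompactSpace Y] [Nontrivial Y] :
    ∃ (D : Set (Set X)) (hD : IsPartition D),
      Nonempty (@Homeomorph D Y (decompTop D hD.cover) _) := by
  have : CompactSpace X := hX.2.1
  obtain ⟨g, hgc, hgs⟩ := hX.exists_continuous_surjective_natBool
  obtain ⟨h, hhc, hhs⟩ := exists_nat_bool_continuous_surjective_of_compact Y
  exact ⟨_, isPartition_range_preimage_singleton (hhs.comp hgs),
    nonempty_homeomorph_decompTop_fibers (hhc.comp hgc) (hhs.comp hgs)⟩

/-- For any Cantor set `X` and any nondegenerate Peano continuum `Y`, there exists a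
partition of `X` whose decomposition space is homeomorphic to `Y`. -/
theorem cantor_has_decomposition_homeomorphic_to_peano
    {X Y : Type*} [TopologicalSpace X] (hX : IsCantorSpace X)
    [MetricSpace Y] [CompactSpace Y] [ConnectedSpace Y]
    [LocallyConnectedSpace Y] [Nontrivial Y] :
    ∃ (D : Set (Set X)) (hD : IsPartition D),
      Nonempty (@Homeomorph D Y (decompTop D hD.cover) _) :=
  cantor_has_decomposition_homeomorphic_to_peano_general hX
end

section
/- Let X be a compact metric space and suppose for each n there is a finite family of nonempty closed sets whose union is Xⁿ, where X¹ ⊇ X² ⊇ ⋯, each set at level n has diameter at most (diam X)/3ⁿ, each set at level n contains exactly two sets of level n+1 which are disjoint, and distinct sets at any fixed level are at positive distance from each other. Then S = ⋂ₙ Xⁿ is a nonempty zero-dimensional perfect compact metric space, i.e., a Cantor set. -/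
/-!
The traces on `S` of the level-`n` sets cover `S` by finitely many pairwise disjoint closed
pieces, so each piece is clopen in `S`; since their diameters tend to zero they form a base of
`S`. Every `F n σ` meets `S`: the sets `Xᵐ ∩ F n σ` are closed, decreasing and nonempty (each
contains a level-`m` descendant of `σ`), so Cantor's intersection theorem applies. A point `x` of
a level-`n` piece misses one of its two disjoint children, and a point of
`S` in that child lies within `diam X / 3ⁿ` of `x`, so `x` is not isolated.
-/

open Set Metric Filter Topology Function

theorem isClopen_of_pairwise_disjoint_closed_cover {Y ι : Type*} [TopologicalSpace Y] [Finite ι]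
    {s : ι → Set Y} (hclosed : ∀ i, IsClosed (s i)) (hdisj : Pairwise (Disjoint on s))
    (hcover : ⋃ i, s i = univ) (i : ι) : IsClopen (s i) := by
  have hcompl : (s i)ᶜ = ⋃ j ∈ ({i}ᶜ : Set ι), s j := by
    ext y
    simp only [mem_compl_iff, mem_iUnion, exists_prop]
    constructor
    · intro hyi
      obtain ⟨j, hyj⟩ := mem_iUnion.1 (hcover.symm ▸ mem_univ y)
      exact ⟨j, fun hji => hyi (hji ▸ hyj), hyj⟩
    · rintro ⟨j, hji, hyj⟩ hyi
      exact disjoint_left.1 (hdisj hji) hyj hyi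
  refine ⟨hclosed i, ?_⟩
  rw [← isClosed_compl_iff, hcompl]
  exact (toFinite _).isClosed_biUnion fun j _ => hclosed j

theorem Metric.disjoint_of_forall_le_dist {X : Type*} [PseudoMetricSpace X] {s t : Set X} {δ : ℝ}
    (hδ : 0 < δ) (h : ∀ p ∈ s, ∀ q ∈ t, δ ≤ dist p q) : Disjoint s t :=
  disjoint_left.2 fun x hs ht => (h x hs x ht).not_gt (by rwa [dist_self])

namespace CantorScheme

variable {X : Type*} {F : (n : ℕ) → (Fin n → Bool) → Set X}

def limit (F : (n : ℕ) → (Fin n → Bool) → Set X) : Set X :=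
  ⋂ n, ⋃ σ : Fin n → Bool, F n σ

theorem antitone_iUnion
    (hsub : ∀ n (σ : Fin (n + 1) → Bool), F (n + 1) σ ⊆ F n (Fin.init σ)) :
    Antitone fun n => ⋃ σ : Fin n → Bool, F n σ :=
  antitone_nat_of_succ_le fun n _ hx =>
    let ⟨σ, hσ⟩ := mem_iUnion.1 hx
    mem_iUnion.2 ⟨Fin.init σ, hsub n σ hσ⟩

theorem exists_subset_of_add
    (hsub : ∀ n (σ : Fin (n + 1) → Bool), F (n + 1) σ ⊆ F n (Fin.init σ))
    {n : ℕ} (σ : Fin n → Bool) (k : ℕ) :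
    ∃ τ : Fin (n + k) → Bool, F (n + k) τ ⊆ F n σ := by
  induction k with
  | zero => exact ⟨σ, subset_rfl⟩
  | succ k ih =>
    obtain ⟨τ, hτ⟩ := ih
    refine ⟨Fin.snoc τ false, (hsub (n + k) _).trans ?_⟩
    rwa [Fin.init_snoc]

section Topology

variable [TopologicalSpace X]

theorem isClosed_limit (hclosed : ∀ n σ, IsClosed (F n σ)) : IsClosed (limit F) :=
  isClosed_iInter fun n => isClosed_iUnion_of_finite (hclosed n)

theorem limit_inter_nonempty [CompactSpace X] (hne : ∀ n σ, (F n σ).Nonempty)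
    (hclosed : ∀ n σ, IsClosed (F n σ))
    (hsub : ∀ n (σ : Fin (n + 1) → Bool), F (n + 1) σ ⊆ F n (Fin.init σ))
    {n : ℕ} (σ : Fin n → Bool) : (limit F ∩ F n σ).Nonempty := by
  have hmeets : ∀ m, ((⋃ τ : Fin m → Bool, F m τ) ∩ F n σ).Nonempty := fun m => by
    obtain ⟨τ, hτ⟩ := exists_subset_of_add hsub σ m
    obtain ⟨y, hy⟩ := hne _ τ
    exact ⟨y, antitone_iUnion hsub (Nat.le_add_left m n) (mem_iUnion_of_mem τ hy), hτ hy⟩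
  have hclosed' : ∀ m, IsClosed ((⋃ τ : Fin m → Bool, F m τ) ∩ F n σ) := fun m =>
    (isClosed_iUnion_of_finite (hclosed m)).inter (hclosed n σ)
  rw [limit, iInter_inter]
  exact IsCompact.nonempty_iInter_of_directed_nonempty_isCompact_isClosed _
    (Antitone.directed_ge fun _ _ hij => inter_subset_inter_left _ (antitone_iUnion hsub hij))
    hmeets (fun m => (hclosed' m).isCompact) hclosed'

theorem exists_mem_limit_inter_ne [CompactSpace X] (hne : ∀ n σ, (F n σ).Nonempty)
    (hclosed : ∀ n σ, IsClosed (F n σ))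
    (hsub : ∀ n (σ : Fin (n + 1) → Bool), F (n + 1) σ ⊆ F n (Fin.init σ))
    (hdisj : ∀ n, Pairwise (Disjoint on (F n))) {n : ℕ} (σ : Fin n → Bool) (x : X) :
    ∃ y ∈ limit F ∩ F n σ, y ≠ x := by
  have hchildren : Disjoint (F (n + 1) (Fin.snoc σ false)) (F (n + 1) (Fin.snoc σ true)) :=
    hdisj (n + 1) fun h => by simpa using congrFun h (Fin.last n)
  obtain ⟨b, hxb⟩ : ∃ b, x ∉ F (n + 1) (Fin.snoc σ b) := by
    by_cases hx : x ∈ F (n + 1) (Fin.snoc σ false)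
    · exact ⟨true, disjoint_left.1 hchildren hx⟩
    · exact ⟨false, hx⟩
  obtain ⟨y, hyS, hyb⟩ := limit_inter_nonempty hne hclosed hsub (Fin.snoc σ b)
  have hyσ : y ∈ F n σ := by simpa using hsub n _ hyb
  exact ⟨y, ⟨hyS, hyσ⟩, fun hyx => hxb (hyx ▸ hyb)⟩

theorem isClopen_preimage_val (hclosed : ∀ n σ, IsClosed (F n σ))
    (hdisj : ∀ n, Pairwise (Disjoint on (F n))) {n : ℕ} (σ : Fin n → Bool) :
    IsClopen ((↑) ⁻¹' F n σ : Set (limit F)) := by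
  refine isClopen_of_pairwise_disjoint_closed_cover
    (fun τ => (hclosed n τ).preimage continuous_subtype_val)
    (fun τ τ' h => (hdisj n h).preimage _) ?_ σ
  rw [← preimage_iUnion, preimage_eq_univ_iff]
  rintro _ ⟨x, rfl⟩
  exact mem_iInter.1 x.2 n

end Topology

theorem exists_forall_diam_lt [PseudoMetricSpace X]
    (hdiam : ∀ n σ, diam (F n σ) ≤ diam (univ : Set X) / 3 ^ n) {ε : ℝ} (hε : 0 < ε) :
    ∃ n, ∀ σ : Fin n → Bool, diam (F n σ) < ε := by
  obtain ⟨n, hn⟩ : ∃ n : ℕ, diam (univ : Set X) / 3 ^ n < ε :=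
    (tendsto_const_nhds.div_atTop
      (tendsto_pow_atTop_atTop_of_one_lt (by norm_num : (1 : ℝ) < 3))).eventually
      (gt_mem_nhds hε) |>.exists
  exact ⟨n, fun σ => (hdiam n σ).trans_lt hn⟩

section Metric

variable [PseudoMetricSpace X] [CompactSpace X]

theorem exists_mem_subset_ball
    (hsmall : ∀ ε > 0, ∃ n, ∀ σ : Fin n → Bool, diam (F n σ) < ε)
    {x : X} (hx : x ∈ limit F) {ε : ℝ} (hε : 0 < ε) :
    ∃ n, ∃ σ : Fin n → Bool, x ∈ F n σ ∧ F n σ ⊆ ball x ε := by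
  obtain ⟨n, hn⟩ := hsmall ε hε
  obtain ⟨σ, hxσ⟩ := mem_iUnion.1 (mem_iInter.1 hx n)
  exact ⟨n, σ, hxσ, fun y hy =>
    (dist_le_diam_of_mem isBounded_of_compactSpace hy hxσ).trans_lt (hn σ)⟩

theorem isTopologicalBasis_preimage_val (hclosed : ∀ n σ, IsClosed (F n σ))
    (hsmall : ∀ ε > 0, ∃ n, ∀ σ : Fin n → Bool, diam (F n σ) < ε)
    (hdisj : ∀ n, Pairwise (Disjoint on (F n))) :
    TopologicalSpace.IsTopologicalBasis
      {t : Set (limit F) | ∃ n σ, (↑) ⁻¹' F n σ = t} := by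
  refine TopologicalSpace.isTopologicalBasis_of_isOpen_of_nhds ?_ fun x u hxu hu => ?_
  · rintro _ ⟨n, σ, rfl⟩
    exact (isClopen_preimage_val hclosed hdisj σ).isOpen
  · obtain ⟨ε, hε, hball⟩ := Metric.isOpen_iff.1 hu x hxu
    obtain ⟨n, σ, hxσ, hσ⟩ := exists_mem_subset_ball hsmall x.2 hε
    exact ⟨_, ⟨n, σ, rfl⟩, hxσ, fun y hy => hball (hσ hy)⟩

theorem not_isOpen_singleton (hne : ∀ n σ, (F n σ).Nonempty)
    (hclosed : ∀ n σ, IsClosed (F n σ))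
    (hsmall : ∀ ε > 0, ∃ n, ∀ σ : Fin n → Bool, diam (F n σ) < ε)
    (hsub : ∀ n (σ : Fin (n + 1) → Bool), F (n + 1) σ ⊆ F n (Fin.init σ))
    (hdisj : ∀ n, Pairwise (Disjoint on (F n))) (x : limit F) : ¬IsOpen {x} := by
  intro hopen
  obtain ⟨ε, hε, hball⟩ := Metric.isOpen_iff.1 hopen x rfl
  obtain ⟨n, σ, -, hσ⟩ := exists_mem_subset_ball hsmall x.2 hε
  obtain ⟨y, ⟨hyS, hyσ⟩, hyx⟩ := exists_mem_limit_inter_ne hne hclosed hsub hdisj σ x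
  have hyx' : (⟨y, hyS⟩ : limit F) ∈ ({x} : Set (limit F)) := hball (hσ hyσ)
  exact hyx (congrArg Subtype.val hyx')

end Metric

end CantorScheme

open CantorScheme

/-- Let `X` be a compact metric space with a binary tree of nonempty closed sets
`F n σ` (indexed by binary strings `σ` of length `n`), where the sets at level `n`
have diameter at most `diam X / 3ⁿ`, each set at level `n+1` is contained in its
parent at level `n` (so the level sets `Xⁿ = ⋃ σ, F n σ` are decreasing and each
level-`n` set contains the two sets of level `n+1` extending it), and distinct sets
at any fixed level are at positive distance from each other (hence disjoint).
Then `S = ⋂ₙ Xⁿ` is a nonempty zero-dimensional perfect compact metrizable space,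
i.e., a Cantor set. -/
theorem cantor_scheme_intersection_is_cantor
    {X : Type*} [MetricSpace X] [CompactSpace X]
    (F : (n : ℕ) → (Fin n → Bool) → Set X)
    (hne : ∀ n σ, (F n σ).Nonempty)
    (hclosed : ∀ n σ, IsClosed (F n σ))
    (hdiam : ∀ n σ, Metric.diam (F n σ) ≤ Metric.diam (Set.univ : Set X) / 3 ^ n)
    (hsub : ∀ n (σ : Fin (n + 1) → Bool), F (n + 1) σ ⊆ F n (Fin.init σ))
    (hsep : ∀ n (σ τ : Fin n → Bool), σ ≠ τ →
      ∃ δ > 0, ∀ p ∈ F n σ, ∀ q ∈ F n τ, δ ≤ dist p q) :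
    IsCantorSpace ↥(⋂ n, ⋃ σ : Fin n → Bool, F n σ) := by
  have hdisj : ∀ n, Pairwise (Disjoint on (F n)) := fun n σ τ h =>
    let ⟨_, hδ, hle⟩ := hsep n σ τ h
    disjoint_of_forall_le_dist hδ hle
  have hsmall := fun ε (hε : 0 < ε) => exists_forall_diam_lt hdiam hε
  change IsCantorSpace (limit F)
  have hS : (limit F).Nonempty :=
    (limit_inter_nonempty hne hclosed hsub (n := 0) default).mono inter_subset_left
  exact ⟨hS.to_subtype,
    isCompact_iff_compactSpace.1 (isClosed_limit hclosed).isCompact, inferInstance,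
    ⟨_, isTopologicalBasis_preimage_val hclosed hsmall hdisj,
      fun _ ⟨_, σ, hσ⟩ => hσ ▸ isClopen_preimage_val hclosed hdisj σ⟩,
    CantorScheme.not_isOpen_singleton hne hclosed hsmall hsub hdisj⟩
end
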